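/- arXiv:2604.24165 — 6 statements merged into one kernel-verified Lean document; each statement's English description precedes it below -/
import Mathlib

section
/- Let z_1, …, z_n ∈ ℂ satisfy Σ_{i=1}^n z_i = 0. Then (Σ_{i=1}^n |z_i|)² ≥ 2 Σ_{i=1}^n |z_i|². Moreover, equality holds if and only if either z_1 = ⋯ = z_n = 0, or there exist distinct indices p ≠ q and a nonzero α ∈ ℂ such that z_p = α, z_q = −α, and z_i = 0 for all i ∉ {p, q}. -/
/-!
Put `a i = ‖z i‖` and `S = ∑ a i`. Since `z i = -∑_{j ≠ i} z j`, the triangle inequality gives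
`2 a i ≤ S`, and `S² - 2 ∑ a i² = ∑ a i (S - 2 a i)` is a sum of nonnegative terms. Equality
forces every nonzero `a i` to equal `S / 2`; if `S ≠ 0` there are then exactly two of them, and
the vanishing of the sum makes the two nonzero `z i` opposite.
-/

open Finset

section Inequality

variable {ι : Type*} {s : Finset ι}

theorem two_mul_norm_le_sum_norm_of_sum_eq_zero {E : Type*} [SeminormedAddCommGroup E]
    {f : ι → E} (hf : ∑ j ∈ s, f j = 0) {i : ι} (hi : i ∈ s) :
    2 * ‖f i‖ ≤ ∑ j ∈ s, ‖f j‖ := by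
  classical
  have hrest : ∑ j ∈ s.erase i, f j = -f i := by
    rw [eq_neg_iff_add_eq_zero, add_comm, add_sum_erase s f hi, hf]
  have hle : ‖f i‖ ≤ ∑ j ∈ s.erase i, ‖f j‖ := by
    simpa only [hrest, norm_neg] using norm_sum_le (s.erase i) f
  rw [← add_sum_erase s (fun j => ‖f j‖) hi]
  linarith

theorem sq_sum_sub_two_mul_sum_sq {R : Type*} [CommRing R] (a : ι → R) :
    (∑ i ∈ s, a i) ^ 2 - 2 * ∑ i ∈ s, a i ^ 2 = ∑ i ∈ s, a i * (∑ j ∈ s, a j - 2 * a i) := by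
  rw [sum_congr rfl fun i _ => mul_sub (a i) _ _, sum_sub_distrib, ← sum_mul, mul_sum]
  simp only [sq, mul_left_comm (a _) 2]

variable {R : Type*} [CommRing R] [LinearOrder R] [IsStrictOrderedRing R] {a : ι → R}

theorem two_mul_sum_sq_le_sq_sum (ha : ∀ i ∈ s, 0 ≤ a i)
    (hle : ∀ i ∈ s, 2 * a i ≤ ∑ j ∈ s, a j) :
    2 * ∑ i ∈ s, a i ^ 2 ≤ (∑ i ∈ s, a i) ^ 2 := by
  have := sum_nonneg fun i hi => mul_nonneg (ha i hi) (sub_nonneg.2 (hle i hi))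
  rw [← sq_sum_sub_two_mul_sum_sq] at this
  linarith

theorem sq_sum_eq_two_mul_sum_sq_iff (ha : ∀ i ∈ s, 0 ≤ a i)
    (hle : ∀ i ∈ s, 2 * a i ≤ ∑ j ∈ s, a j) :
    (∑ i ∈ s, a i) ^ 2 = 2 * ∑ i ∈ s, a i ^ 2 ↔
      ∀ i ∈ s, a i = 0 ∨ 2 * a i = ∑ j ∈ s, a j := by
  rw [← sub_eq_zero, sq_sum_sub_two_mul_sum_sq,
    sum_eq_zero_iff_of_nonneg fun i hi => mul_nonneg (ha i hi) (sub_nonneg.2 (hle i hi))]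
  simp only [mul_eq_zero, sub_eq_zero, eq_comm (a := ∑ j ∈ s, a j)]

end Inequality

theorem card_filter_ne_zero_eq_two {ι K : Type*} [Field K] [CharZero K] [DecidableEq K]
    {s : Finset ι} {a : ι → K} (h : ∀ i ∈ s, a i = 0 ∨ 2 * a i = ∑ j ∈ s, a j)
    (hS : ∑ j ∈ s, a j ≠ 0) :
    #(s.filter (a · ≠ 0)) = 2 := by
  have hdouble : 2 * ∑ j ∈ s, a j = #(s.filter (a · ≠ 0)) * ∑ j ∈ s, a j := by
    conv_lhs => rw [← sum_filter_ne_zero, mul_sum]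
    rw [sum_congr rfl fun i hi => (h i (mem_filter.1 hi).1).resolve_left (mem_filter.1 hi).2,
      sum_const, nsmul_eq_mul]
  exact_mod_cast (mul_right_cancel₀ hS hdouble).symm

section Equality

variable {ι E : Type*} [Fintype ι] [NormedAddCommGroup E] {f : ι → E}

theorem exists_pair_of_norm_eq_zero_or_two_mul_eq_sum_norm (hf : ∑ i, f i = 0)
    (h : ∀ i, ‖f i‖ = 0 ∨ 2 * ‖f i‖ = ∑ j, ‖f j‖) :
    (∀ i, f i = 0) ∨ ∃ p q : ι, p ≠ q ∧ ∃ α : E, α ≠ 0 ∧ f p = α ∧ f q = -α ∧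
      ∀ i, i ≠ p → i ≠ q → f i = 0 := by
  classical
  by_cases h0 : ∀ i, f i = 0
  · exact .inl h0
  obtain ⟨p, hp⟩ := not_forall.1 h0
  have hS : ∑ j, ‖f j‖ ≠ 0 := by
    rw [← (h p).resolve_left (norm_ne_zero_iff.2 hp)]
    exact mul_ne_zero two_ne_zero (norm_ne_zero_iff.2 hp)
  obtain ⟨x, y, hxy, hsupp⟩ := card_eq_two.1 (card_filter_ne_zero_eq_two (fun i _ => h i) hS)
  have hmem : ∀ i, f i ≠ 0 ↔ i = x ∨ i = y := fun i => by
    simpa only [mem_filter, mem_univ, true_and, norm_ne_zero_iff, mem_insert, mem_singleton]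
      using Finset.ext_iff.1 hsupp i
  have hzero : ∀ i, i ≠ x → i ≠ y → f i = 0 := fun i hix hiy =>
    not_not.1 fun hi => ((hmem i).1 hi).elim hix hiy
  rw [Fintype.sum_eq_add x y hxy fun i hi => hzero i hi.1 hi.2] at hf
  exact .inr ⟨x, y, hxy, f x, (hmem x).2 (.inl rfl), rfl, eq_neg_of_add_eq_zero_right hf, hzero⟩

theorem norm_eq_zero_or_two_mul_eq_sum_norm_of_pair {p q : ι} (hpq : p ≠ q) {α : E}
    (hp : f p = α) (hq : f q = -α) (hrest : ∀ i, i ≠ p → i ≠ q → f i = 0) (i : ι) :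
    ‖f i‖ = 0 ∨ 2 * ‖f i‖ = ∑ j, ‖f j‖ := by
  rw [Fintype.sum_eq_add p q hpq fun j hj => by rw [hrest j hj.1 hj.2, norm_zero], hp, hq,
    norm_neg, ← two_mul]
  by_cases hip : i = p
  · exact .inr (by rw [hip, hp])
  by_cases hiq : i = q
  · exact .inr (by rw [hiq, hq, norm_neg])
  exact .inl (by rw [hrest i hip hiq, norm_zero])

theorem norm_eq_zero_or_two_mul_eq_sum_norm_iff (hf : ∑ i, f i = 0) :
    (∀ i, ‖f i‖ = 0 ∨ 2 * ‖f i‖ = ∑ j, ‖f j‖) ↔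
      (∀ i, f i = 0) ∨ ∃ p q : ι, p ≠ q ∧ ∃ α : E, α ≠ 0 ∧ f p = α ∧ f q = -α ∧
        ∀ i, i ≠ p → i ≠ q → f i = 0 := by
  refine ⟨exists_pair_of_norm_eq_zero_or_two_mul_eq_sum_norm hf, ?_⟩
  rintro (h0 | ⟨p, q, hpq, α, -, hp, hq, hrest⟩) i
  · exact .inl (by rw [h0 i, norm_zero])
  · exact norm_eq_zero_or_two_mul_eq_sum_norm_of_pair hpq hp hq hrest i

end Equality

/-- If `z_1, …, z_n ∈ ℂ` satisfy `Σ z_i = 0`, then `(Σ |z_i|)² ≥ 2 Σ |z_i|²`, with equality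
iff all `z_i = 0`, or there are distinct `p ≠ q` and `α ≠ 0` with `z_p = α`, `z_q = −α`,
and `z_i = 0` for all `i ∉ {p, q}`. -/
theorem sum_abs_sq_ge_two_sum_sq_abs {n : ℕ} (z : Fin n → ℂ)
    (h : ∑ i, z i = 0) :
    (∑ i, ‖z i‖) ^ 2 ≥ 2 * ∑ i, ‖z i‖ ^ 2 ∧
    ((∑ i, ‖z i‖) ^ 2 = 2 * ∑ i, ‖z i‖ ^ 2 ↔
      (∀ i, z i = 0) ∨
      ∃ p q : Fin n, p ≠ q ∧ ∃ α : ℂ, α ≠ 0 ∧ z p = α ∧ z q = -α ∧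
        ∀ i, i ≠ p → i ≠ q → z i = 0) := by
  have hnonneg : ∀ i ∈ univ, 0 ≤ ‖z i‖ := fun i _ => norm_nonneg (z i)
  have hle : ∀ i ∈ univ, 2 * ‖z i‖ ≤ ∑ j, ‖z j‖ := fun _ hi =>
    two_mul_norm_le_sum_norm_of_sum_eq_zero h hi
  refine ⟨two_mul_sum_sq_le_sq_sum hnonneg hle, ?_⟩
  rw [sq_sum_eq_two_mul_sum_sq_iff hnonneg hle, ← norm_eq_zero_or_two_mul_eq_sum_norm_iff h]
  simp only [mem_univ, true_implies]
end

section
/- Let G be a finite simple graph with m edges, and let μ_1, …, μ_n ∈ ℂ be the roots (with multiplicity) of its permanental polynomial π(G,x). Then E_per(G) = Σ_{i=1}^n |μ_i| ≥ 2√m. -/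
open Polynomial Matrix

/-- The permanental polynomial `per(x·I − A)` of a square matrix `A`. -/
noncomputable def permPoly {n : ℕ} {R : Type*} [CommRing R] (A : Matrix (Fin n) (Fin n) R) :
    Polynomial R :=
  ((Polynomial.X : R[X]) • (1 : Matrix (Fin n) (Fin n) R[X]) - A.map Polynomial.C).permanent

/-- The permanental polynomial `π(G,x) = per(x·I − A(G))` of a graph, over `ℂ`. -/
noncomputable def graphPermPoly {n : ℕ} (G : SimpleGraph (Fin n)) : Polynomial ℂ :=
  letI := Classical.decRel G.Adj
  permPoly (G.adjMatrix ℂ)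

/-- The permanental energy `E_per(G)`: the sum of the moduli of the roots (with
multiplicity) of the permanental polynomial of `G`. -/
noncomputable def perEnergy {n : ℕ} (G : SimpleGraph (Fin n)) : ℝ :=
  ((graphPermPoly G).roots.map (fun z : ℂ => ‖z‖)).sum

/-! For a matrix `A` with zero diagonal, only the identity and the transpositions contribute to
the top three coefficients of `per(x·I − A) = ∑_σ ∏_i (x·I − A)_{σ i, i}`: it is monic, its
`x^(n-1)` coefficient vanishes and its `x^(n-2)` coefficient is `∑_{i<j} a_ij a_ji`, which is
the number `m` of edges when `A = A(G)`. By Vieta the permanental roots therefore satisfy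
`∑ μ = 0` and `e₂(μ) = m`, so `∑ μ² = -2m`, and
`(∑ |μ|)² = ∑ |μ|² + 2 e₂(|μ|) ≥ |∑ μ²| + 2 |e₂(μ)| = 4m`. -/

open Finset

namespace Multiset

theorem esymm_two_cons {R : Type*} [CommSemiring R] (a : R) (s : Multiset R) :
    (a ::ₘ s).esymm 2 = s.esymm 2 + a * s.sum := by
  simp only [esymm, powersetCard_cons, powersetCard_one, map_map, Function.comp_apply,
    Multiset.map_add, prod_cons, prod_singleton, sum_add]
  rw [sum_map_mul_left, map_id']

theorem sq_sum_eq {R : Type*} [CommSemiring R] (s : Multiset R) :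
    s.sum ^ 2 = (s.map (· ^ 2)).sum + 2 * s.esymm 2 := by
  induction s using Multiset.induction with
  | empty => simp [esymm, powersetCard_zero_right 1]
  | cons a s ih => rw [sum_cons, map_cons, sum_cons, esymm_two_cons, add_sq, ih]; ring

theorem norm_esymm_le {K : Type*} [NormedField K] (s : Multiset K) (k : ℕ) :
    ‖s.esymm k‖ ≤ (s.map (‖·‖)).esymm k := by
  rw [esymm, esymm, powersetCard_map, map_map]
  refine (norm_multiset_sum_le _).trans_eq ?_
  simp only [map_map, Function.comp_def]
  congr 1
  exact map_congr rfl fun t _ => map_multiset_prod (normHom : K →*₀ ℝ) t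

theorem four_mul_norm_esymm_two_le {𝕜 : Type*} [RCLike 𝕜] (s : Multiset 𝕜) :
    4 * ‖s.esymm 2‖ ≤ (s.map (‖·‖)).sum ^ 2 + ‖s.sum‖ ^ 2 := by
  have hsq : ‖(s.map (· ^ 2)).sum‖ ≤ ((s.map (‖·‖)).map (· ^ 2)).sum := by
    refine (norm_multiset_sum_le _).trans_eq ?_
    simp [map_map]
  have h2e : ‖2 * s.esymm 2‖ ≤ ‖s.sum‖ ^ 2 + ‖(s.map (· ^ 2)).sum‖ := by
    rw [show 2 * s.esymm 2 = s.sum ^ 2 - (s.map (· ^ 2)).sum by rw [sq_sum_eq]; ring]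
    exact (norm_sub_le _ _).trans_eq (by rw [norm_pow])
  rw [norm_mul, RCLike.norm_two] at h2e
  have := norm_esymm_le s 2
  rw [sq_sum_eq (s.map (‖·‖))]
  linarith

end Multiset

theorem Polynomial.Monic.esymm_two_roots {F : Type*} [Field F] {p : F[X]} (hm : p.Monic)
    (hs : p.Splits) (h : 2 ≤ p.natDegree) : p.roots.esymm 2 = p.coeff (p.natDegree - 2) := by
  rw [coeff_eq_esymm_roots_of_splits hs (Nat.sub_le _ _), Nat.sub_sub_self h, hm.leadingCoeff]
  ring

namespace Sym2

variable {α : Type*} [DecidableEq α]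

def toPerm : Sym2 α → Equiv.Perm α := Sym2.lift ⟨Equiv.swap, Equiv.swap_comm⟩

@[simp]
theorem toPerm_mk (x y : α) : toPerm s(x, y) = Equiv.swap x y := rfl

theorem toPerm_injOn : Set.InjOn toPerm {e : Sym2 α | ¬e.IsDiag} := by
  intro e he f hf h
  induction e with | h x y => ?_
  induction f with | h u v => ?_
  simp only [toPerm_mk] at h
  have hx := congr($h x)
  simp only [Equiv.swap_apply_left, Equiv.swap_apply_def] at hx
  grind [Sym2.eq_iff, Sym2.mk_isDiag_iff]

variable [Fintype α]

theorem card_support_toPerm {e : Sym2 α} (he : ¬e.IsDiag) : #e.toPerm.support = 2 := by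
  induction e with | h x y => exact Equiv.Perm.card_support_swap (by simpa using he)

theorem surjOn_toPerm :
    Set.SurjOn toPerm {e : Sym2 α | ¬e.IsDiag} {σ | #σ.support = 2} := by
  intro σ hσ
  obtain ⟨x, y, hxy, rfl⟩ := Equiv.Perm.card_support_eq_two.mp hσ
  exact ⟨s(x, y), by simpa using hxy, rfl⟩

end Sym2

namespace Matrix

variable {ι R : Type*} [CommSemiring R]

def pairProd (A : Matrix ι ι R) : Sym2 ι → R :=
  Sym2.lift ⟨fun x y => A x y * A y x, fun _ _ => mul_comm _ _⟩

@[simp]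
theorem pairProd_mk (A : Matrix ι ι R) (x y : ι) : A.pairProd s(x, y) = A x y * A y x := rfl

end Matrix

section PermPoly

variable {n : ℕ}

section CommRing

variable {R : Type*} [CommRing R] {A : Matrix (Fin n) (Fin n) R}

theorem prod_X_smul_one_sub_map_C_apply_perm (hA : A.diag = 0) (σ : Equiv.Perm (Fin n)) :
    ∏ i, ((X : R[X]) • (1 : Matrix (Fin n) (Fin n) R[X]) - A.map C) (σ i) i =
      C (∏ i ∈ σ.support, -A (σ i) i) * X ^ (n - #σ.support) := by
  have hfixed : ∀ i ∈ σ.supportᶜ,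
      ((X : R[X]) • (1 : Matrix (Fin n) (Fin n) R[X]) - A.map C) (σ i) i = X := fun i hi => by
    simp [Equiv.Perm.notMem_support.mp (mem_compl.mp hi), show A i i = 0 from congrFun hA i]
  rw [← prod_mul_prod_compl σ.support, prod_congr rfl hfixed, prod_const, card_compl,
    Fintype.card_fin, map_prod]
  congr 1
  exact prod_congr rfl fun i hi => by simp [Equiv.Perm.mem_support.mp hi]

theorem coeff_permPoly_sub (hA : A.diag = 0) {k : ℕ} (hk : k ≤ n) :
    (permPoly A).coeff (n - k) =
      ∑ σ : Equiv.Perm (Fin n) with #σ.support = k, ∏ i ∈ σ.support, -A (σ i) i := by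
  simp only [permPoly, Matrix.permanent, finsetSum_coeff,
    prod_X_smul_one_sub_map_C_apply_perm hA, coeff_C_mul_X_pow, sum_filter]
  refine sum_congr rfl fun σ _ => if_congr ?_ rfl rfl
  have := card_le_univ σ.support
  simp only [Fintype.card_fin] at this
  omega

theorem natDegree_permPoly_le (hA : A.diag = 0) : (permPoly A).natDegree ≤ n := by
  simp only [permPoly, Matrix.permanent, prod_X_smul_one_sub_map_C_apply_perm hA]
  refine natDegree_sum_le_of_forall_le _ _ fun σ _ => (natDegree_C_mul_le _ _).trans ?_
  exact (natDegree_X_pow_le _).trans (Nat.sub_le _ _)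

theorem coeff_permPoly_self (hA : A.diag = 0) : (permPoly A).coeff n = 1 := by
  simpa [card_eq_zero, Equiv.Perm.support_eq_empty_iff, filter_eq'] using
    coeff_permPoly_sub hA n.zero_le

theorem permPoly_monic (hA : A.diag = 0) : (permPoly A).Monic :=
  monic_of_natDegree_le_of_coeff_eq_one n (natDegree_permPoly_le hA) (coeff_permPoly_self hA)

theorem natDegree_permPoly [Nontrivial R] (hA : A.diag = 0) : (permPoly A).natDegree = n :=
  natDegree_eq_of_le_of_coeff_ne_zero (natDegree_permPoly_le hA)
    (by simp [coeff_permPoly_self hA])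

theorem nextCoeff_permPoly [Nontrivial R] (hA : A.diag = 0) : (permPoly A).nextCoeff = 0 := by
  rw [nextCoeff, natDegree_permPoly hA]
  split_ifs with hn
  · rfl
  · simpa [Equiv.Perm.card_support_ne_one] using coeff_permPoly_sub hA (k := 1) (by omega)

theorem coeff_permPoly_sub_two (hA : A.diag = 0) (hn : 2 ≤ n) :
    (permPoly A).coeff (n - 2) = ∑ e : Sym2 (Fin n) with ¬e.IsDiag, A.pairProd e := by
  rw [coeff_permPoly_sub hA hn]
  symm
  refine sum_nbij Sym2.toPerm (fun e he => ?_) (Sym2.toPerm_injOn.mono ?_) ?_ (fun e he => ?_)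
  · simpa using Sym2.card_support_toPerm (mem_filter.mp he).2
  · simp
  · simpa using Sym2.surjOn_toPerm
  · induction e with | h x y => ?_
    have hxy : x ≠ y := by simpa using (mem_filter.mp he).2
    simp [Equiv.Perm.support_swap hxy, prod_pair hxy, mul_comm]

end CommRing

variable {F : Type*} [Field F] [IsAlgClosed F] {A : Matrix (Fin n) (Fin n) F}

theorem sum_roots_permPoly (hA : A.diag = 0) : (permPoly A).roots.sum = 0 := by
  rw [← neg_eq_zero, ← (IsAlgClosed.splits _).nextCoeff_eq_neg_sum_roots_of_monic
    (permPoly_monic hA), nextCoeff_permPoly hA]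

theorem esymm_two_roots_permPoly (hA : A.diag = 0) (hn : 2 ≤ n) :
    (permPoly A).roots.esymm 2 = ∑ e : Sym2 (Fin n) with ¬e.IsDiag, A.pairProd e := by
  rw [(permPoly_monic hA).esymm_two_roots (IsAlgClosed.splits _)
    (by rw [natDegree_permPoly hA]; exact hn), natDegree_permPoly hA, coeff_permPoly_sub_two hA hn]

end PermPoly

namespace SimpleGraph

theorem sum_pairProd_adjMatrix {V R : Type*} [Fintype V] [DecidableEq V] [CommSemiring R]
    (G : SimpleGraph V) [DecidableRel G.Adj] :
    ∑ e : Sym2 V with ¬e.IsDiag, (G.adjMatrix R).pairProd e = #G.edgeFinset := by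
  have hterm : ∀ e, (G.adjMatrix R).pairProd e = if e ∈ G.edgeSet then 1 else 0 := by
    intro e
    induction e with | h x y => by_cases h : G.Adj x y <;> simp [h, G.adj_comm y x]
  simp only [hterm, sum_boole, filter_filter]
  congr 2
  ext e
  simpa using fun he => G.not_isDiag_of_mem_edgeSet he

variable {n : ℕ} (G : SimpleGraph (Fin n))

theorem perEnergy_nonneg : 0 ≤ perEnergy G :=
  Multiset.sum_nonneg fun _ hx => by
    obtain ⟨z, -, rfl⟩ := Multiset.mem_map.mp hx
    exact norm_nonneg z

variable [DecidableRel G.Adj]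

theorem graphPermPoly_eq : graphPermPoly G = permPoly (G.adjMatrix ℂ) := by
  unfold graphPermPoly
  congr!

theorem four_mul_card_edgeFinset_le_perEnergy_sq :
    4 * (#G.edgeFinset : ℝ) ≤ perEnergy G ^ 2 := by
  rcases lt_or_ge n 2 with hn | hn
  · have : Subsingleton (Fin n) := Fin.subsingleton_iff_le_one.2 (by omega)
    have hG : #G.edgeFinset = 0 := by
      rw [card_eq_zero, edgeFinset_eq_empty]
      exact Subsingleton.elim G ⊥
    simpa [hG] using sq_nonneg (perEnergy G)
  have hA := G.diag_adjMatrix (α := ℂ)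
  have key := (graphPermPoly G).roots.four_mul_norm_esymm_two_le
  rw [graphPermPoly_eq, sum_roots_permPoly hA, esymm_two_roots_permPoly hA hn,
    sum_pairProd_adjMatrix, Complex.norm_natCast, norm_zero, zero_pow two_ne_zero,
    add_zero] at key
  simpa [perEnergy, graphPermPoly_eq] using key

end SimpleGraph

/-- **Lower bound for the permanental energy.**
For every simple graph `G` with `m` edges, `E_per(G) ≥ 2√m`. -/
theorem perEnergy_ge_two_sqrt_edges {n : ℕ} (G : SimpleGraph (Fin n))
    [DecidableRel G.Adj] :
    perEnergy G ≥ 2 * Real.sqrt (G.edgeFinset.card : ℝ) := by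
  refine (pow_le_pow_iff_left₀ (by positivity) G.perEnergy_nonneg two_ne_zero).mp ?_
  rw [mul_pow, Real.sq_sqrt (by positivity)]
  linarith [G.four_mul_card_edgeFinset_le_perEnergy_sq]
end

section
/- Let G be a finite simple graph on n vertices with m edges. Then E_per(G) = 2√m if and only if G is isomorphic to the disjoint union of the star K_{1,m} on m+1 vertices and n − m − 1 isolated vertices, i.e., G ≅ K_{1,m} ⊔ (n−m−1)K_1. -/
open Polynomial Matrix

/-- The graph on `n` vertices consisting of the star `K_{1,m}` (center `0`, leaves
`1,…,m`) together with `n − m − 1` isolated vertices. -/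
def starPlusIsolated (n m : ℕ) : SimpleGraph (Fin n) where
  Adj u v := (u.val = 0 ∧ 1 ≤ v.val ∧ v.val ≤ m) ∨ (v.val = 0 ∧ 1 ≤ u.val ∧ u.val ≤ m)
  symm := ⟨by intro u v h; tauto⟩
  loopless := ⟨by rintro u (⟨h0, h1, -⟩ | ⟨h0, h1, -⟩) <;> omega⟩


/-!
Expanding the permanent, `π(G, x) = ∑ (-1)^|supp σ| x^(n - |supp σ|)` over the permutations `σ`
that move every vertex to a neighbour. None moves exactly one vertex and the edge swaps are those
moving two, so the permanental roots `μ` have `∑ μ = 0` and `e₂(μ) = m`, hence `∑ μ² = -2m`.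
As `∑ μ = 0`, every `|μ| ≤ E/2` where `E = E_per(G)`, so `2m ≤ ∑ |μ|² ≤ E²/2`. If `E = 2√m` this
is tight: every root is `0` or has modulus `√m`, so exactly two roots are nonzero, and as they sum
to `0` and their squares to `-2m`, they are `±i√m`, i.e. `π(G, x) = xⁿ + m xⁿ⁻²`. Comparing
coefficients, that happens iff none of these permutations moves three or more vertices, i.e. iff
`G` has no triangle (3-cycles) and no two disjoint edges (products of two swaps), i.e. iff `G` is
a star plus isolated vertices.
-/

open Finset

namespace Multiset

variable {R : Type*} [CommSemiring R]

theorem esymm_one (s : Multiset R) : s.esymm 1 = s.sum := by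
  simp [esymm, powersetCard_one, map_map]

theorem esymm_cons_succ (a : R) (s : Multiset R) (k : ℕ) :
    (a ::ₘ s).esymm (k + 1) = s.esymm (k + 1) + a * s.esymm k := by
  simp [esymm, powersetCard_cons, map_map, sum_map_mul_left]

theorem sq_sum (s : Multiset R) : s.sum ^ 2 = (s.map (· ^ 2)).sum + 2 * s.esymm 2 := by
  induction s using Multiset.induction_on with
  | empty => simp [esymm, powersetCard_zero_right]
  | cons a s ih =>
    rw [sum_cons, map_cons, sum_cons, esymm_cons_succ, esymm_one, add_sq, ih]
    ring

theorem two_mul_norm_le_sum_norm {E : Type*} [SeminormedAddCommGroup E] {r : Multiset E}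
    (hr : r.sum = 0) {z : E} (hz : z ∈ r) : 2 * ‖z‖ ≤ (r.map (‖·‖)).sum := by
  obtain ⟨t, rfl⟩ := exists_cons_of_mem hz
  rw [sum_cons, add_eq_zero_iff_eq_neg] at hr
  rw [map_cons, sum_cons, hr, norm_neg]
  linarith [norm_multiset_sum_le t]

/- `∑ ‖z‖ (√a - ‖z‖) = 2a - ∑ ‖z‖² ≤ 2a - ‖∑ z²‖ = 0` is a sum of terms that are nonnegative
by `two_mul_norm_le_sum_norm`. -/
theorem forall_eq_zero_or_norm_eq_sqrt {r : Multiset ℂ} {a : ℝ} (ha : 0 ≤ a) (hsum : r.sum = 0)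
    (hsq : (r.map (· ^ 2)).sum = -(2 * (a : ℂ))) (hE : (r.map (‖·‖)).sum = 2 * √a) :
    ∀ z ∈ r, z = 0 ∨ ‖z‖ = √a := by
  have hle (z) (hz : z ∈ r) : ‖z‖ ≤ √a := by linarith [two_mul_norm_le_sum_norm hsum hz]
  have hsq_le : 2 * a ≤ (r.map fun z => ‖z‖ ^ 2).sum := by
    have := norm_multiset_sum_le (r.map (· ^ 2))
    rw [hsq, norm_neg, map_map] at this
    simpa [Function.comp_def, abs_of_nonneg ha] using this
  have hterms : (r.map fun z => ‖z‖ * (√a - ‖z‖)).sum ≤ 0 := by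
    simp only [mul_sub, sum_map_sub, sum_map_mul_right, hE, ← sq]
    linarith [Real.mul_self_sqrt ha]
  have hnonneg : ∀ x ∈ r.map fun z => ‖z‖ * (√a - ‖z‖), 0 ≤ x := by
    simp only [mem_map, forall_exists_index, and_imp, forall_apply_eq_imp_iff₂]
    exact fun z hz => mul_nonneg (norm_nonneg z) (sub_nonneg.2 (hle z hz))
  intro z hz
  have hz' := mem_map_of_mem (fun z => ‖z‖ * (√a - ‖z‖)) hz
  rcases mul_eq_zero.1 (le_antisymm ((single_le_sum hnonneg _ hz').trans hterms)
    (hnonneg _ hz')) with h | h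
  · exact .inl (norm_eq_zero.1 h)
  · exact .inr (sub_eq_zero.1 h).symm

theorem exists_eq_cons_cons_replicate_zero {E : Type*} [SeminormedAddCommGroup E]
    {r : Multiset E} {c : ℝ} (hc : 0 < c) (hr : ∀ z ∈ r, z = 0 ∨ ‖z‖ = c)
    (hE : (r.map (‖·‖)).sum = 2 * c) : ∃ p q, r = p ::ₘ q ::ₘ replicate (card r - 2) 0 := by
  classical
  set t := r.filter (· ≠ 0)
  set u := r.filter (¬ · ≠ 0)
  have hu : u = replicate (card u) 0 := eq_replicate_card.2 (by simp [u])
  have hsplit : t + u = r := filter_add_not _ r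
  have ht : (t.map (‖·‖)).sum = card t * c := by
    rw [map_congr rfl fun z hz => (hr z (mem_filter.1 hz).1).resolve_left (mem_filter.1 hz).2,
      map_const', sum_replicate, nsmul_eq_mul]
  have hcard : card t = 2 := by
    rw [← hsplit, map_add, sum_add, ht, hu, map_replicate, norm_zero, sum_replicate,
      smul_zero, add_zero] at hE
    exact_mod_cast mul_right_cancel₀ hc.ne' hE
  obtain ⟨p, q, hpq⟩ := card_eq_two.1 hcard
  have hk : card u = card r - 2 := by
    rw [← hsplit, card_add, hcard]; omega
  refine ⟨p, q, ?_⟩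
  conv_lhs => rw [← hsplit, hpq, hu, hk]
  simp

open Complex in
theorem sum_norm_eq_two_sqrt_iff {r : Multiset ℂ} {a : ℝ} (ha : 0 < a) (hsum : r.sum = 0)
    (hsq : (r.map (· ^ 2)).sum = -(2 * (a : ℂ))) :
    (r.map (‖·‖)).sum = 2 * √a ↔ r = (√a * I) ::ₘ -(√a * I) ::ₘ replicate (card r - 2) 0 := by
  constructor
  · intro hE
    obtain ⟨p, q, hr⟩ := exists_eq_cons_cons_replicate_zero (Real.sqrt_pos.2 ha)
      (forall_eq_zero_or_norm_eq_sqrt ha.le hsum hsq hE) hE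
    refine hr.trans ?_
    rw [hr] at hsum hsq
    simp only [sum_cons, map_cons, map_replicate, sum_replicate, smul_zero, add_zero, ne_eq,
      OfNat.ofNat_ne_zero, not_false_eq_true, zero_pow] at hsum hsq
    have hq : q = -p := by linear_combination hsum
    have hp2 : p ^ 2 = -a := by rw [hq] at hsq; linear_combination hsq / 2
    have hsqrt : (√a : ℂ) ^ 2 = a := by rw [← ofReal_pow, Real.sq_sqrt ha.le]
    have hp : (p - √a * I) * (p + √a * I) = 0 := by
      linear_combination hp2 - (√a : ℂ) ^ 2 * I_sq + hsqrt
    rcases mul_eq_zero.1 hp with hp | hp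
    · rw [hq, sub_eq_zero.1 hp]
    · rw [hq, eq_neg_of_add_eq_zero_left hp, neg_neg, cons_swap]
  · intro hr
    rw [hr]
    simp [abs_of_nonneg (Real.sqrt_nonneg a)]
    ring

end Multiset

namespace Polynomial

theorem Monic.eq_prod_X_sub_C_iff {K : Type*} [Field K] [IsAlgClosed K] {p : K[X]}
    (hp : p.Monic) (s : Multiset K) : p = (s.map (X - C ·)).prod ↔ p.roots = s :=
  ⟨fun h => h ▸ roots_multiset_prod_X_sub_C s,
    fun h => h ▸ (IsAlgClosed.splits p).eq_prod_roots_of_monic hp⟩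

open Complex in
theorem prod_X_sub_C_sqrt_mul_I (k : ℕ) {a : ℝ} (ha : 0 ≤ a) :
    (((√a * I : ℂ) ::ₘ -(√a * I) ::ₘ Multiset.replicate k 0).map (X - C ·)).prod =
      X ^ (k + 2) + C (a : ℂ) * X ^ k := by
  have hsq : C (√a * I : ℂ) ^ 2 = -C (a : ℂ) := by
    rw [← map_pow, mul_pow, I_sq, ← ofReal_pow, Real.sq_sqrt ha, mul_neg_one, map_neg]
  simp only [Multiset.map_cons, Multiset.prod_cons, Multiset.map_replicate, map_zero, sub_zero,
    Multiset.prod_replicate, map_neg, sub_neg_eq_add]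
  linear_combination (-X ^ k) * hsq

end Polynomial

theorem Equiv.swap_eq_swap_iff {α : Type*} [DecidableEq α] {a b c d : α} (hab : a ≠ b) :
    swap a b = swap c d ↔ s(a, b) = s(c, d) := by
  constructor
  · intro h
    have := congrArg (· a) h
    simp only [swap_apply_left, swap_apply_def] at this
    split_ifs at this <;> grind
  · intro h
    rcases Sym2.eq_iff.1 h with ⟨rfl, rfl⟩ | ⟨rfl, rfl⟩
    · rfl
    · exact swap_comm _ _

theorem Equiv.Perm.exists_apply_eq_and_mem_iff {α : Type*} [Fintype α] [DecidableEq α]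
    {s t : Finset α} {a b : α} (ha : a ∉ s) (hb : b ∉ t) (hst : #s = #t) :
    ∃ π : Equiv.Perm α, π a = b ∧ ∀ x, π x ∈ t ↔ x ∈ s := by
  set π₀ := (s.equivOfCardEq hst).extendSubtype
  have h₀ (x : α) : π₀ x ∈ t ↔ x ∈ s :=
    ⟨not_imp_not.1 (extendSubtype_not_mem _ x), extendSubtype_mem _ x⟩
  refine ⟨π₀.trans (swap (π₀ a) b), by simp, fun x => ?_⟩
  rw [trans_apply, swap_apply_def]
  split_ifs with h₁ h₂
  · rw [π₀.injective h₁]; simp [ha, hb]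
  · rw [← h₀, h₂]; simp [hb, (h₀ a).not.2 ha]
  · exact h₀ x

namespace SimpleGraph

variable {V : Type*} {G : SimpleGraph V}

theorem exists_common_vertex {a b : V} (hab : G.Adj a b)
    (htri : ∀ ⦃x y z⦄, G.Adj x y → G.Adj y z → ¬G.Adj x z)
    (hmeet : ∀ ⦃x y z w⦄, G.Adj x y → G.Adj z w → x = z ∨ x = w ∨ y = z ∨ y = w) :
    ∃ v, ∀ ⦃x y⦄, G.Adj x y → x = v ∨ y = v := by
  by_cases ha : ∀ ⦃x y⦄, G.Adj x y → x = a ∨ y = a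
  · exact ⟨a, ha⟩
  push Not at ha
  obtain ⟨c, d, hcd, hca, hda⟩ := ha
  obtain ⟨e, hbe, hea⟩ : ∃ e, G.Adj b e ∧ e ≠ a := by
    rcases hmeet hab hcd with h | h | rfl | rfl
    exacts [(hca h.symm).elim, (hda h.symm).elim, ⟨d, hcd, hda⟩, ⟨c, hcd.symm, hca⟩]
  have key : ∀ ⦃y⦄, G.Adj a y → y = b := by
    intro y hay
    by_contra hyb
    rcases hmeet hay hbe with h | h | h | rfl
    exacts [hab.ne h, hea h.symm, hyb h, htri hab hbe hay]
  refine ⟨b, fun x y hxy => ?_⟩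
  rcases hmeet hab hxy with rfl | rfl | h | h
  exacts [.inr (key hxy), .inl (key hxy.symm), .inl h.symm, .inr h.symm]

variable [Fintype V] [DecidableEq V]

variable (G) in
/-- The permutations surviving in the expansion of `per(x·I − A(G))`; their nontrivial cycles
form a Sachs subgraph of `G` (disjoint edges and cycles). -/
def IsSachsPerm (σ : Equiv.Perm V) : Prop := ∀ i ∈ σ.support, G.Adj i (σ i)

instance [DecidableRel G.Adj] : DecidablePred G.IsSachsPerm :=
  fun _ => inferInstanceAs (Decidable (∀ _ ∈ _, _))

theorem isSachsPerm_one : G.IsSachsPerm 1 := by simp [IsSachsPerm]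

theorem isSachsPerm_swap {a b : V} (h : G.Adj a b) : G.IsSachsPerm (Equiv.swap a b) := by
  intro i hi
  rw [Equiv.Perm.support_swap h.ne, mem_insert, mem_singleton] at hi
  rcases hi with rfl | rfl <;> simp [h, h.symm]

theorem IsSachsPerm.mul {σ τ : Equiv.Perm V} (hσ : G.IsSachsPerm σ) (hτ : G.IsSachsPerm τ)
    (hστ : σ.Disjoint τ) : G.IsSachsPerm (σ * τ) := by
  intro i hi
  rw [hστ.support_mul, mem_union] at hi
  rcases hi with hi | hi
  · rw [Equiv.Perm.mul_apply, (hστ i).resolve_left (Equiv.Perm.mem_support.1 hi)]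
    exact hσ i hi
  · rw [hστ.commute.eq, Equiv.Perm.mul_apply, (hστ i).resolve_right (Equiv.Perm.mem_support.1 hi)]
    exact hτ i hi

theorem IsSachsPerm.card_support_le_two {v : V} (hv : ∀ ⦃a b⦄, G.Adj a b → a = v ∨ b = v)
    {σ : Equiv.Perm V} (hσ : G.IsSachsPerm σ) : #σ.support ≤ 2 := by
  refine (card_le_card fun i hi => ?_).trans (card_le_two (a := v) (b := σ.symm v))
  rcases hv (hσ i hi) with rfl | h
  · exact mem_insert_self _ _
  · simp [← h]

theorem not_adj_of_forall_card_support_le_two (h : ∀ σ, G.IsSachsPerm σ → #σ.support ≤ 2)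
    ⦃a b c : V⦄ (hab : G.Adj a b) (hbc : G.Adj b c) : ¬G.Adj a c := by
  intro hac
  have hnd : [a, b, c].Nodup := by simp [hab.ne, hbc.ne, hac.ne]
  have hsupp := Equiv.Perm.support_swap_mul_swap hnd
  set σ := Equiv.swap a b * Equiv.swap b c
  have hσ : σ a = b ∧ σ b = c ∧ σ c = a := by
    simp [σ, Equiv.swap_apply_of_ne_of_ne, hab.ne, hac.ne, hbc.ne.symm, hac.ne.symm]
  have := h σ fun i hi => by
    rw [hsupp, mem_insert, mem_insert, mem_singleton] at hi
    rcases hi with rfl | rfl | rfl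
    exacts [hσ.1 ▸ hab, hσ.2.1 ▸ hbc, hσ.2.2 ▸ hac.symm]
  rw [hsupp] at this
  simp [hab.ne, hbc.ne, hac.ne] at this

theorem eq_or_eq_of_forall_card_support_le_two (h : ∀ σ, G.IsSachsPerm σ → #σ.support ≤ 2)
    ⦃a b c d : V⦄ (hab : G.Adj a b) (hcd : G.Adj c d) : a = c ∨ a = d ∨ b = c ∨ b = d := by
  by_contra! hne
  have hdisj : (Equiv.swap a b).Disjoint (Equiv.swap c d) := by
    rw [Equiv.Perm.disjoint_iff_disjoint_support, Equiv.Perm.support_swap hab.ne,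
      Equiv.Perm.support_swap hcd.ne]
    simp [hne.1.symm, hne.2.1.symm, hne.2.2.1.symm, hne.2.2.2.symm]
  have := h _ ((isSachsPerm_swap hab).mul (isSachsPerm_swap hcd) hdisj)
  rw [hdisj.card_support_mul, Equiv.Perm.card_support_swap hab.ne,
    Equiv.Perm.card_support_swap hcd.ne] at this
  omega

variable [DecidableRel G.Adj]

theorem degree_eq_card_edgeFinset {v : V} (hv : ∀ ⦃a b⦄, G.Adj a b → a = v ∨ b = v) :
    G.degree v = #G.edgeFinset := by
  rw [← card_incidenceFinset_eq_degree]
  congr 1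
  ext e
  induction e with | _ a b =>
  simp only [mem_incidenceFinset, incidenceSet, Set.mem_ofPred_eq, mem_edgeFinset, mem_edgeSet,
    Sym2.mem_iff, and_iff_left_iff_imp]
  exact fun h => (hv h).imp Eq.symm Eq.symm

variable (G)

theorem card_isSachsPerm_card_support_eq_zero :
    #{σ | G.IsSachsPerm σ ∧ #σ.support = 0} = 1 := by
  rw [card_eq_one]
  refine ⟨1, eq_singleton_iff_unique_mem.2 ⟨by simp [isSachsPerm_one], fun σ hσ => ?_⟩⟩
  exact (by simpa using hσ : _ ∧ σ = 1).2

theorem card_isSachsPerm_card_support_eq_one :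
    #{σ | G.IsSachsPerm σ ∧ #σ.support = 1} = 0 := by
  simp [Equiv.Perm.card_support_ne_one]

theorem card_isSachsPerm_card_support_eq_two :
    #{σ | G.IsSachsPerm σ ∧ #σ.support = 2} = #G.edgeFinset := by
  symm
  refine card_bij (fun e _ => Sym2.lift ⟨Equiv.swap, Equiv.swap_comm⟩ e) ?_ ?_ ?_
  · intro e he
    induction e with | _ a b =>
    rw [mem_edgeFinset, mem_edgeSet] at he
    simp [isSachsPerm_swap he, Equiv.Perm.card_support_swap he.ne]
  · intro e he f hf h
    induction e with | _ a b =>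
    induction f with | _ c d =>
    rw [mem_edgeFinset, mem_edgeSet] at he hf
    exact (Equiv.swap_eq_swap_iff he.ne).1 h
  · intro σ hσ
    rw [mem_filter, Equiv.Perm.card_support_eq_two] at hσ
    obtain ⟨-, hσ, a, b, hab, rfl⟩ := hσ
    refine ⟨s(a, b), ?_, rfl⟩
    simpa using hσ a (by simp [Equiv.Perm.support_swap hab])

end SimpleGraph

section

variable {n : ℕ} (G : SimpleGraph (Fin n)) [DecidableRel G.Adj]

theorem graphPermPoly_eq_sum :
    graphPermPoly G = ∑ σ ∈ univ.filter G.IsSachsPerm,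
      monomial (n - #σ.support) ((-1 : ℂ) ^ #σ.support) := by
  have : graphPermPoly G = permPoly (G.adjMatrix ℂ) := by unfold graphPermPoly; congr
  rw [this, permPoly, Matrix.permanent, sum_filter]
  refine sum_congr rfl fun σ _ => ?_
  set M : Matrix (Fin n) (Fin n) ℂ[X] := (X : ℂ[X]) • 1 - (G.adjMatrix ℂ).map C
  have hfix : ∀ i ∈ σ.supportᶜ, M (σ i) i = X := fun i hi => by
    simp [M, Equiv.Perm.notMem_support.1 (mem_compl.1 hi)]
  have hmov : ∀ i ∈ σ.support, M (σ i) i = if G.Adj i (σ i) then -1 else 0 := fun i hi => by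
    simp [M, Equiv.Perm.mem_support.1 hi, G.adj_comm, apply_ite]
  rw [← prod_compl_mul_prod σ.support, prod_congr rfl hfix, prod_congr rfl hmov, prod_ite_zero,
    prod_const, prod_const, card_compl, Fintype.card_fin]
  by_cases h : G.IsSachsPerm σ
  · rw [if_pos h, if_pos (show ∀ i ∈ σ.support, G.Adj i (σ i) from h), ← C_mul_X_pow_eq_monomial,
      mul_comm, map_pow, map_neg, map_one]
  · rw [if_neg h, if_neg (show ¬∀ i ∈ σ.support, G.Adj i (σ i) from h), mul_zero]

theorem coeff_graphPermPoly_sub {k : ℕ} (hk : k ≤ n) :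
    (graphPermPoly G).coeff (n - k) = (-1) ^ k * #{σ | G.IsSachsPerm σ ∧ #σ.support = k} := by
  have hsub (σ : Equiv.Perm (Fin n)) : n - #σ.support = n - k ↔ #σ.support = k := by
    have := σ.support.card_le_univ; simp only [Fintype.card_fin] at this; omega
  simp only [graphPermPoly_eq_sum, finsetSum_coeff, coeff_monomial, hsub]
  rw [sum_ite, sum_const_zero, add_zero, filter_filter, sum_congr rfl fun σ hσ => by
    rw [(mem_filter.1 hσ).2.2], sum_const, nsmul_eq_mul, mul_comm]

theorem natDegree_graphPermPoly_le : (graphPermPoly G).natDegree ≤ n := by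
  rw [graphPermPoly_eq_sum]
  exact natDegree_sum_le_of_forall_le _ _ fun σ _ =>
    (natDegree_monomial_le _).trans (Nat.sub_le _ _)

theorem coeff_graphPermPoly_self : (graphPermPoly G).coeff n = 1 := by
  have h := coeff_graphPermPoly_sub G (Nat.zero_le n)
  rwa [G.card_isSachsPerm_card_support_eq_zero, Nat.sub_zero, pow_zero, Nat.cast_one, one_mul] at h

theorem monic_graphPermPoly : (graphPermPoly G).Monic :=
  monic_of_natDegree_le_of_coeff_eq_one n (natDegree_graphPermPoly_le G)
    (coeff_graphPermPoly_self G)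

theorem natDegree_graphPermPoly : (graphPermPoly G).natDegree = n :=
  le_antisymm (natDegree_graphPermPoly_le G)
    (le_natDegree_of_ne_zero (by simp [coeff_graphPermPoly_self]))

theorem esymm_roots_graphPermPoly {k : ℕ} (hk : k ≤ n) :
    (graphPermPoly G).roots.esymm k = #{σ | G.IsSachsPerm σ ∧ #σ.support = k} := by
  have h := coeff_eq_esymm_roots_of_splits (IsAlgClosed.splits (graphPermPoly G)) (k := n - k)
    (by rw [natDegree_graphPermPoly]; exact Nat.sub_le n k)
  rw [natDegree_graphPermPoly, coeff_graphPermPoly_sub G hk, (monic_graphPermPoly G).leadingCoeff,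
    Nat.sub_sub_self hk, one_mul] at h
  exact (mul_left_cancel₀ (pow_ne_zero k (neg_ne_zero.2 one_ne_zero)) h).symm

theorem graphPermPoly_eq_iff_forall_card_support_le_two {m : ℕ} (hm : #G.edgeFinset = m) :
    graphPermPoly G = X ^ n + C (m : ℂ) * X ^ (n - 2) ↔
      ∀ σ, G.IsSachsPerm σ → #σ.support ≤ 2 := by
  constructor
  · intro hP σ hσ
    by_contra! hlt
    have hk : #σ.support ≤ n := by simpa using σ.support.card_le_univ
    have hcoeff := coeff_graphPermPoly_sub G hk
    rw [hP, coeff_add, coeff_X_pow, coeff_C_mul, coeff_X_pow, if_neg (by omega), if_neg (by omega),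
      mul_zero, add_zero, eq_comm, mul_eq_zero, Nat.cast_eq_zero, card_eq_zero] at hcoeff
    refine hcoeff.elim (pow_ne_zero _ (neg_ne_zero.2 one_ne_zero)) fun h => ?_
    exact (eq_empty_iff_forall_notMem.1 h) σ (by simp [hσ])
  · intro h2
    have hS : univ.filter G.IsSachsPerm =
        insert 1 (univ.filter fun σ => G.IsSachsPerm σ ∧ #σ.support = 2) := by
      ext σ
      simp only [mem_filter, mem_univ, true_and, mem_insert]
      constructor
      · intro hσ
        obtain h | h : #σ.support = 0 ∨ #σ.support = 2 := by
          have := σ.card_support_ne_one; have := h2 σ hσ; omega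
        · exact .inl (Equiv.Perm.support_eq_empty_iff.1 (card_eq_zero.1 h))
        · exact .inr ⟨hσ, h⟩
      · rintro (rfl | ⟨hσ, -⟩)
        · exact G.isSachsPerm_one
        · exact hσ
    rw [graphPermPoly_eq_sum, hS, sum_insert (by simp), sum_congr rfl fun σ hσ => by
      rw [(mem_filter.1 hσ).2.2], sum_const, G.card_isSachsPerm_card_support_eq_two, hm]
    simp [← C_mul_X_pow_eq_monomial, nsmul_eq_mul]

theorem starPlusIsolated_zero (n : ℕ) : starPlusIsolated n 0 = ⊥ := by
  ext a b
  simp only [starPlusIsolated, SimpleGraph.bot_adj, iff_false]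
  omega

variable {G}

theorem nonempty_iso_starPlusIsolated {m : ℕ} {v : Fin n}
    (hv : ∀ ⦃a b⦄, G.Adj a b → a = v ∨ b = v) (hm : #G.edgeFinset = m) :
    Nonempty (G ≃g starPlusIsolated n m) := by
  have hvN : v ∉ G.neighborFinset v := by simp
  have hN : #(G.neighborFinset v) = m := by
    rw [G.card_neighborFinset_eq_degree, G.degree_eq_card_edgeFinset hv, hm]
  have hmn : m < n := by
    simpa [card_insert_of_notMem hvN, hN] using (insert v (G.neighborFinset v)).card_le_univ
  set t : Finset (Fin n) := (Icc 1 m).attachFin fun k hk => by rw [mem_Icc] at hk; omega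
  have hmem (x : Fin n) : x ∈ t ↔ 1 ≤ x.val ∧ x.val ≤ m := by simp [t]
  obtain ⟨π, hπv, hπ⟩ := Equiv.Perm.exists_apply_eq_and_mem_iff hvN (t := t) (b := ⟨0, by omega⟩)
    (by simp [hmem]) (by simp [t, hN])
  have h0 (x : Fin n) : (π x).val = 0 ↔ x = v := by
    rw [← π.injective.eq_iff, hπv, Fin.ext_iff]
  refine ⟨⟨π, fun {a b} => ?_⟩⟩
  change ((π a).val = 0 ∧ 1 ≤ (π b).val ∧ (π b).val ≤ m) ∨
    ((π b).val = 0 ∧ 1 ≤ (π a).val ∧ (π a).val ≤ m) ↔ G.Adj a b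
  simp only [h0, ← hmem, hπ, SimpleGraph.mem_neighborFinset]
  constructor
  · rintro (⟨rfl, h⟩ | ⟨rfl, h⟩)
    exacts [h, h.symm]
  · intro h
    rcases hv h with rfl | rfl
    exacts [.inl ⟨rfl, h⟩, .inr ⟨rfl, h.symm⟩]

theorem forall_card_support_le_two_iff_nonempty_iso {m : ℕ} (hm : #G.edgeFinset = m) :
    (∀ σ, G.IsSachsPerm σ → #σ.support ≤ 2) ↔ Nonempty (G ≃g starPlusIsolated n m) := by
  constructor
  · intro h
    by_cases hE : ∃ a b, G.Adj a b
    · obtain ⟨a, b, hab⟩ := hE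
      obtain ⟨v, hv⟩ := SimpleGraph.exists_common_vertex hab
        (SimpleGraph.not_adj_of_forall_card_support_le_two h)
        (SimpleGraph.eq_or_eq_of_forall_card_support_le_two h)
      exact nonempty_iso_starPlusIsolated hv hm
    · have hG : G = ⊥ := by
        ext a b
        simpa using fun h => hE ⟨a, b, h⟩
      obtain rfl : m = 0 := by rw [← hm, card_eq_zero, SimpleGraph.edgeFinset_eq_empty, hG]
      rw [starPlusIsolated_zero, hG]
      exact ⟨SimpleGraph.Iso.refl⟩
  · rintro ⟨e⟩ σ hσ
    rcases Nat.eq_zero_or_pos n with rfl | hn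
    · exact σ.support.card_le_univ.trans (by simp)
    · refine hσ.card_support_le_two (v := e.symm ⟨0, hn⟩) fun a b hab => ?_
      rcases e.map_adj_iff.2 hab with ⟨h, -⟩ | ⟨h, -⟩
      · exact .inl (e.toEquiv.eq_symm_apply.2 (Fin.ext h))
      · exact .inr (e.toEquiv.eq_symm_apply.2 (Fin.ext h))

theorem perEnergy_eq_two_sqrt_iff_graphPermPoly_eq {m : ℕ} (hm : #G.edgeFinset = m) :
    perEnergy G = 2 * √(m : ℝ) ↔ graphPermPoly G = X ^ n + C (m : ℂ) * X ^ (n - 2) := by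
  rcases Nat.eq_zero_or_pos m with rfl | hm0
  · have hG : G = ⊥ := SimpleGraph.edgeFinset_eq_empty.1 (card_eq_zero.1 hm)
    have hP := (graphPermPoly_eq_iff_forall_card_support_le_two G hm).2 fun σ hσ => by
      rw [card_eq_zero.2 (eq_empty_of_forall_notMem fun i hi => by simpa [hG] using hσ i hi)]
      norm_num
    simp [hP, perEnergy, Multiset.nsmul_singleton]
  · obtain ⟨e, he⟩ := card_pos.1 (hm ▸ hm0)
    have hn : 2 ≤ n := by
      induction e with | _ a b =>
      have := (SimpleGraph.mem_edgeFinset.1 he).ne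
      omega
    have hsum : (graphPermPoly G).roots.sum = 0 := by
      rw [← Multiset.esymm_one, esymm_roots_graphPermPoly G (by omega),
        G.card_isSachsPerm_card_support_eq_one, Nat.cast_zero]
    have hsq : ((graphPermPoly G).roots.map (· ^ 2)).sum = -(2 * ((m : ℝ) : ℂ)) := by
      have := Multiset.sq_sum (graphPermPoly G).roots
      rw [hsum, esymm_roots_graphPermPoly G hn, G.card_isSachsPerm_card_support_eq_two, hm] at this
      push_cast
      linear_combination -this
    rw [perEnergy, Multiset.sum_norm_eq_two_sqrt_iff (by positivity) hsum hsq,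
      ← (IsAlgClosed.splits _).natDegree_eq_card_roots, natDegree_graphPermPoly,
      ← (monic_graphPermPoly G).eq_prod_X_sub_C_iff, prod_X_sub_C_sqrt_mul_I _ m.cast_nonneg,
      Nat.sub_add_cancel hn, Complex.ofReal_natCast]

end

/-- **Characterization of equality in the lower bound.**
For a simple graph `G` on `n` vertices with `m` edges, `E_per(G) = 2√m` iff
`G ≅ K_{1,m} ⊔ (n−m−1)K_1`. -/
theorem perEnergy_eq_two_sqrt_iff_star {n m : ℕ} (G : SimpleGraph (Fin n))
    [DecidableRel G.Adj] (hm : G.edgeFinset.card = m) :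
    perEnergy G = 2 * Real.sqrt (m : ℝ) ↔ Nonempty (G ≃g starPlusIsolated n m) := by
  rw [perEnergy_eq_two_sqrt_iff_graphPermPoly_eq hm,
    graphPermPoly_eq_iff_forall_card_support_le_two G hm,
    forall_card_support_le_two_iff_nonempty_iso hm]
end

section
/- Let G be a finite simple graph on n vertices with spectral radius ρ = ρ(G). Then E_per(G) ≤ n·ρ. -/
open Polynomial Matrix

/-- The spectral radius of a real square matrix: the supremum of the moduli of the
roots of its characteristic polynomial (over `ℂ`). -/
noncomputable def specRadius {n : ℕ} (A : Matrix (Fin n) (Fin n) ℝ) : ℝ :=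
  sSup {r : ℝ | ∃ μ : ℂ, (A.map Complex.ofReal).charpoly.IsRoot μ ∧ ‖μ‖ = r}

/-!
Every root `μ` of `π(G, x)` has `‖μ‖ ≤ ρ`, and there are at most `n` roots. If `t = ‖μ‖ > ρ`, then
`t • 1 - A` is positive definite, so every principal minor `D(S)` of it is positive. Expanding the
permanent `P(S)` of the principal block `S` of `μ • 1 - A`, and `D(S)`, along the cycles through a
vertex `v ∈ S` gives
`P(S) = (μ - a_vv) P(S - v) + ∑_c ± w_c P(S \ c)`,
`D(S) = (t - a_vv) D(S - v) - ∑_c w_c D(S \ c)`,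
with the same cycle weights `w_c ≥ 0`. By induction, `‖P(S)‖ / D(S)` is monotone in `S`, so
`‖per(μ • 1 - A)‖ ≥ det(t • 1 - A) > 0` and `μ` is not a root.
-/

namespace Equiv.Perm

variable {ι : Type*}

theorem apply_notMem_of_forall_apply_eq {τ : Perm ι} {K : Finset ι}
    (hτ : ∀ i ∈ K, τ i = i) {i : ι} (hi : i ∉ K) : τ i ∉ K :=
  fun h => hi (by simpa [τ.injective (hτ _ h)] using h)

variable [DecidableEq ι] [Fintype ι]

open Classical in
noncomputable def cyclesThrough (v : ι) : Finset (Perm ι) := {c | c.IsCycle ∧ c v ≠ v}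

theorem mem_cyclesThrough {v : ι} {c : Perm ι} :
    c ∈ cyclesThrough v ↔ c.IsCycle ∧ c v ≠ v := by
  simp [cyclesThrough]

theorem cycleOf_mul_eq_iff {v : ι} {c τ : Perm ι} (hc : c ∈ cyclesThrough v) :
    (c * τ).cycleOf v = c ↔ ∀ i ∈ c.support, τ i = i := by
  obtain ⟨hcycle, hcv⟩ := mem_cyclesThrough.mp hc
  calc (c * τ).cycleOf v = c ↔ c ∈ (c * τ).cycleFactorsFinset := by
        refine ⟨fun h => ?_, fun h => (cycle_is_cycleOf (mem_support.mpr hcv) h).symm⟩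
        have hv : v ∈ (c * τ).support := by
          rw [mem_support, ← cycleOf_apply_self, h]
          exact hcv
        simpa [h] using cycleOf_mem_cycleFactorsFinset_iff.mpr hv
    _ ↔ ∀ i ∈ c.support, τ i = i := by
        simp [mem_cycleFactorsFinset_iff, hcycle, eq_comm]

end Equiv.Perm

theorem Finset.monotone_of_erase_le {ι α : Type*} [DecidableEq ι] [Preorder α]
    {f : Finset ι → α}
    (h : ∀ S, ∀ v ∈ S, (∀ T ⊆ S.erase v, f T ≤ f (S.erase v)) → f (S.erase v) ≤ f S) :
    Monotone f := by
  intro T S hTS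
  induction S using Finset.strongInduction generalizing T with
  | H S ih =>
    obtain rfl | hne := eq_or_ne T S
    · exact le_rfl
    obtain ⟨v, hvS, hvT⟩ := exists_of_ssubset (ssubset_of_subset_of_ne hTS hne)
    have below : ∀ T ⊆ S.erase v, f T ≤ f (S.erase v) :=
      fun T hT => ih _ (erase_ssubset hvS) hT
    exact (below T (subset_erase.mpr ⟨hTS, hvT⟩)).trans (h S v hvS below)

namespace Matrix

open Equiv Equiv.Perm Finset

section CycleExpansion

variable {ι R : Type*} [DecidableEq ι] [CommRing R]

/-- `M` on `S × S` and the identity elsewhere, so that its permanent and determinant are those of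
the principal submatrix `M[S, S]` while the index type stays fixed. -/
def principalBlock (M : Matrix ι ι R) (S : Finset ι) : Matrix ι ι R :=
  of fun i j => if i ∈ S ∧ j ∈ S then M i j else (1 : Matrix ι ι R) i j

theorem principalBlock_principalBlock (M : Matrix ι ι R) (S T : Finset ι) :
    principalBlock (principalBlock M S) T = principalBlock M (S ∩ T) := by
  ext i j
  simp only [principalBlock, of_apply, mem_inter]
  split_ifs <;> tauto

@[simp] theorem principalBlock_empty (M : Matrix ι ι R) : principalBlock M ∅ = 1 := by
  ext i j
  simp [principalBlock]

theorem principalBlock_map {R' : Type*} [CommRing R'] (M : Matrix ι ι R) (f : R →+* R')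
    (S : Finset ι) : principalBlock (M.map f) S = (principalBlock M S).map f := by
  ext i j
  simp only [principalBlock, map_apply, of_apply, one_apply]
  split_ifs <;> simp

variable [Fintype ι]

@[simp] theorem principalBlock_univ (M : Matrix ι ι R) : principalBlock M univ = M := by
  ext i j
  simp [principalBlock]

def immanant (ε : Perm ι →* R) (M : Matrix ι ι R) : R :=
  ∑ σ : Perm ι, ε σ * ∏ i, M (σ i) i

theorem immanant_one (M : Matrix ι ι R) : immanant 1 M = M.permanent := by
  simp [immanant, permanent]

theorem immanant_sign (M : Matrix ι ι R) :
    immanant ((Int.castRingHom R : ℤ →* R).comp ((Units.coeHom ℤ).comp sign)) M = M.det := by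
  simp [immanant, det_apply, Units.smul_def]

theorem immanant_principalBlock_compl (ε : Perm ι →* R) (M : Matrix ι ι R) (K : Finset ι) :
    immanant ε (principalBlock M Kᶜ) =
      ∑ τ with ∀ i ∈ K, τ i = i, ε τ * ∏ i ∈ Kᶜ, M (τ i) i := by
  rw [immanant, ← sum_filter_add_sum_filter_not univ fun τ : Perm ι => ∀ i ∈ K, τ i = i]
  have moving : ∀ τ ∈ univ.filter (fun τ : Perm ι => ¬ ∀ i ∈ K, τ i = i),
      ε τ * ∏ i, principalBlock M Kᶜ (τ i) i = 0 := by
    intro τ hτ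
    obtain ⟨i, hiK, hne⟩ := by simpa using hτ
    exact mul_eq_zero_of_right _ <| prod_eq_zero (mem_univ i) (by simp [principalBlock, hiK, hne])
  rw [sum_eq_zero moving, add_zero]
  refine sum_congr rfl fun τ hτ => ?_
  have hfix : ∀ i ∈ K, τ i = i := (mem_filter.mp hτ).2
  rw [← prod_mul_prod_compl K]
  congr 1
  rw [prod_eq_one fun i hi => by simp [principalBlock, hfix i hi, hi], one_mul]
  refine prod_congr rfl fun i hi => ?_
  have hi : i ∉ K := mem_compl.mp hi
  simp [principalBlock, hi, apply_notMem_of_forall_apply_eq hfix hi]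

theorem prod_mul_apply_of_forall_apply_eq (M : Matrix ι ι R) {c τ : Perm ι}
    (hτ : ∀ i ∈ c.support, τ i = i) :
    ∏ i, M ((c * τ) i) i = (∏ i ∈ c.support, M (c i) i) * ∏ i ∈ c.supportᶜ, M (τ i) i := by
  rw [← prod_mul_prod_compl c.support]
  congr 1
  · exact prod_congr rfl fun i hi => by rw [Perm.mul_apply, hτ i hi]
  · refine prod_congr rfl fun i hi => ?_
    rw [Perm.mul_apply, notMem_support.mp (apply_notMem_of_forall_apply_eq hτ (mem_compl.mp hi))]

/-- Expansion along the cycle through `v`: a permutation either fixes `v`, or factors uniquely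
as `c * τ` with `c` its cycle through `v` and `τ` fixing the support of `c`. -/
theorem immanant_eq_add_sum_cyclesThrough (ε : Perm ι →* R) (M : Matrix ι ι R) (v : ι) :
    immanant ε M = M v v * immanant ε (principalBlock M {v}ᶜ) +
      ∑ c ∈ cyclesThrough v, ε c * (∏ i ∈ c.support, M (c i) i) *
        immanant ε (principalBlock M c.supportᶜ) := by
  rw [immanant, ← sum_filter_add_sum_filter_not univ fun σ : Perm ι => σ v = v]
  congr 1
  · simp only [immanant_principalBlock_compl, mem_singleton, forall_eq, mul_sum]
    refine sum_congr rfl fun σ hσ => ?_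
    rw [Fintype.prod_eq_mul_prod_compl v, (mem_filter.mp hσ).2]
    ring
  · have maps : ∀ σ ∈ univ.filter (fun σ : Perm ι => ¬ σ v = v), σ.cycleOf v ∈ cyclesThrough v :=
      fun σ hσ => by
        have hσv : σ v ≠ v := (mem_filter.mp hσ).2
        exact mem_cyclesThrough.mpr ⟨isCycle_cycleOf σ hσv, by rwa [cycleOf_apply_self]⟩
    rw [← sum_fiberwise_of_maps_to maps]
    refine sum_congr rfl fun c hc => ?_
    rw [immanant_principalBlock_compl, mul_sum]
    symm
    refine sum_equiv (Equiv.mulLeft c) (fun τ => ?_) (fun τ hτ => ?_)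
    · have hcv := (mem_cyclesThrough.mp hc).2
      simp only [mem_filter, mem_univ, true_and, coe_mulLeft, cycleOf_mul_eq_iff hc]
      refine ⟨fun h => ⟨?_, h⟩, And.right⟩
      rwa [Perm.mul_apply, h v (mem_support.mpr hcv)]
    · rw [Equiv.coe_mulLeft, map_mul, prod_mul_apply_of_forall_apply_eq M (mem_filter.mp hτ).2]
      ring

def cycleWeight (A : Matrix ι ι R) (S : Finset ι) (c : Perm ι) : R :=
  ∏ i ∈ c.support, principalBlock A S (c i) i

theorem cycleWeight_map {R' : Type*} [CommRing R'] (A : Matrix ι ι R) (f : R →+* R')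
    (S : Finset ι) (c : Perm ι) : cycleWeight (A.map f) S c = f (cycleWeight A S c) := by
  simp [cycleWeight, principalBlock_map, map_prod]

theorem immanant_principalBlock_scalar_sub (ε : Perm ι →* R) (A : Matrix ι ι R) (z : R)
    {S : Finset ι} {v : ι} (hv : v ∈ S) :
    immanant ε (principalBlock (scalar ι z - A) S) =
      (z - A v v) * immanant ε (principalBlock (scalar ι z - A) (S.erase v)) +
        ∑ c ∈ cyclesThrough v, ε c * (-1) ^ #c.support * cycleWeight A S c *
          immanant ε (principalBlock (scalar ι z - A) (S \ c.support)) := by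
  rw [immanant_eq_add_sum_cyclesThrough ε _ v]
  simp only [principalBlock_principalBlock, ← sdiff_eq_inter_compl, sdiff_singleton_eq_erase]
  congr 1
  · simp [principalBlock, hv]
  · refine sum_congr rfl fun c _ => ?_
    have hoff : ∀ i ∈ c.support,
        principalBlock (scalar ι z - A) S (c i) i = -principalBlock A S (c i) i := fun i hi => by
      simp only [principalBlock, of_apply, sub_apply, scalar_apply,
        diagonal_apply_ne _ (mem_support.mp hi), one_apply_ne (mem_support.mp hi)]
      split_ifs <;> simp
    rw [prod_congr rfl hoff, prod_neg, cycleWeight]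
    ring

theorem permanent_principalBlock_scalar_sub (A : Matrix ι ι R) (z : R) {S : Finset ι} {v : ι}
    (hv : v ∈ S) :
    (principalBlock (scalar ι z - A) S).permanent =
      (z - A v v) * (principalBlock (scalar ι z - A) (S.erase v)).permanent +
        ∑ c ∈ cyclesThrough v, (-1) ^ #c.support * cycleWeight A S c *
          (principalBlock (scalar ι z - A) (S \ c.support)).permanent := by
  simp only [← immanant_one]
  rw [immanant_principalBlock_scalar_sub 1 A z hv]
  simp only [MonoidHom.one_apply, one_mul]

theorem det_principalBlock_scalar_sub (A : Matrix ι ι R) (z : R) {S : Finset ι} {v : ι}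
    (hv : v ∈ S) :
    (principalBlock (scalar ι z - A) S).det =
      (z - A v v) * (principalBlock (scalar ι z - A) (S.erase v)).det -
        ∑ c ∈ cyclesThrough v, cycleWeight A S c *
          (principalBlock (scalar ι z - A) (S \ c.support)).det := by
  simp only [← immanant_sign]
  rw [immanant_principalBlock_scalar_sub _ A z hv, sub_eq_add_neg _ (∑ c ∈ cyclesThrough v, _),
    ← sum_neg_distrib]
  congr 1
  refine sum_congr rfl fun c hc => ?_
  have hsign : ((sign c : ℤ) : R) * (-1) ^ #c.support = -1 := by
    rw [(mem_cyclesThrough.mp hc).1.sign]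
    push_cast
    rw [neg_mul, ← pow_add, Even.neg_one_pow ⟨_, rfl⟩]
  simp only [MonoidHom.coe_comp, Function.comp_apply, Units.coeHom_apply, MonoidHom.coe_coe,
    eq_intCast]
  rw [hsign]
  ring

end CycleExpansion

section Comparison

variable {ι : Type*} [Fintype ι] [DecidableEq ι] {A : Matrix ι ι ℝ}

theorem cycleWeight_nonneg (hA : ∀ i j, 0 ≤ A i j) (S : Finset ι) (c : Perm ι) :
    0 ≤ cycleWeight A S c :=
  prod_nonneg fun i _ => by
    simp only [principalBlock, of_apply, one_apply]
    split_ifs <;> simp [hA]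

theorem le_norm_permanent_principalBlock (hA : ∀ i j, 0 ≤ A i j) {t : ℝ} {z : ℂ} (ht : t ≤ ‖z‖)
    {S : Finset ι} {v : ι} (hv : v ∈ S) :
    (t - A v v) * ‖(principalBlock (scalar ι z - A.map Complex.ofReal) (S.erase v)).permanent‖ -
        ∑ c ∈ cyclesThrough v, cycleWeight A S c *
          ‖(principalBlock (scalar ι z - A.map Complex.ofReal) (S \ c.support)).permanent‖ ≤
      ‖(principalBlock (scalar ι z - A.map Complex.ofReal) S).permanent‖ := by
  rw [permanent_principalBlock_scalar_sub _ z hv]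
  have hdiag : t - A v v ≤ ‖z - A v v‖ := by
    have := norm_sub_norm_le z (A v v)
    rw [Complex.norm_real, Real.norm_of_nonneg (hA v v)] at this
    linarith
  have hcycles : ‖∑ c ∈ cyclesThrough v,
        (-1) ^ #c.support * cycleWeight (A.map Complex.ofReal) S c *
        (principalBlock (scalar ι z - A.map Complex.ofReal) (S \ c.support)).permanent‖ ≤
      ∑ c ∈ cyclesThrough v, cycleWeight A S c *
        ‖(principalBlock (scalar ι z - A.map Complex.ofReal) (S \ c.support)).permanent‖ := by
    refine (norm_sum_le _ _).trans (sum_le_sum fun c _ => ?_)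
    rw [show A.map Complex.ofReal = A.map Complex.ofRealHom from rfl, cycleWeight_map]
    simp [abs_of_nonneg (cycleWeight_nonneg hA S c)]
  refine le_trans ?_ (norm_sub_le_norm_add _ _)
  rw [norm_mul, show A.map Complex.ofReal v v = (A v v : ℂ) from rfl]
  gcongr

theorem norm_permanent_div_det_erase_le (hA : ∀ i j, 0 ≤ A i j) {t : ℝ} {z : ℂ} (ht : t ≤ ‖z‖)
    (hD : ∀ S, 0 < (principalBlock (scalar ι t - A) S).det) {S : Finset ι} {v : ι} (hv : v ∈ S)
    (hbelow : ∀ T ⊆ S.erase v,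
      ‖(principalBlock (scalar ι z - A.map Complex.ofReal) T).permanent‖ /
          (principalBlock (scalar ι t - A) T).det ≤
        ‖(principalBlock (scalar ι z - A.map Complex.ofReal) (S.erase v)).permanent‖ /
          (principalBlock (scalar ι t - A) (S.erase v)).det) :
    ‖(principalBlock (scalar ι z - A.map Complex.ofReal) (S.erase v)).permanent‖ /
        (principalBlock (scalar ι t - A) (S.erase v)).det ≤
      ‖(principalBlock (scalar ι z - A.map Complex.ofReal) S).permanent‖ /
        (principalBlock (scalar ι t - A) S).det := by
  set P : Finset ι → ℝ :=
    fun T => ‖(principalBlock (scalar ι z - A.map Complex.ofReal) T).permanent‖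
  set D : Finset ι → ℝ := fun T => (principalBlock (scalar ι t - A) T).det
  set q := P (S.erase v) / D (S.erase v)
  have hcycle : ∀ c ∈ cyclesThrough v, P (S \ c.support) ≤ q * D (S \ c.support) := by
    intro c hc
    have hsub : S \ c.support ⊆ S.erase v := fun i hi => by
      obtain ⟨hiS, hic⟩ := mem_sdiff.mp hi
      exact mem_erase.mpr ⟨fun h => hic (h ▸ mem_support.mpr (mem_cyclesThrough.mp hc).2), hiS⟩
    exact (div_le_iff₀ (hD _)).mp (hbelow _ hsub)
  have hq : q * D (S.erase v) = P (S.erase v) := div_mul_cancel₀ _ (hD _).ne'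
  rw [le_div_iff₀ (hD S)]
  calc q * D S = (t - A v v) * (q * D (S.erase v)) -
        ∑ c ∈ cyclesThrough v, cycleWeight A S c * (q * D (S \ c.support)) := by
        simp only [D, det_principalBlock_scalar_sub _ t hv, mul_sub, mul_sum]
        congr 1
        · ring
        · exact sum_congr rfl fun c _ => by ring
    _ = (t - A v v) * P (S.erase v) -
        ∑ c ∈ cyclesThrough v, cycleWeight A S c * (q * D (S \ c.support)) := by rw [hq]
    _ ≤ (t - A v v) * P (S.erase v) -
        ∑ c ∈ cyclesThrough v, cycleWeight A S c * P (S \ c.support) := by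
        gcongr with c hc
        · exact cycleWeight_nonneg hA S c
        · exact hcycle c hc
    _ ≤ P S := le_norm_permanent_principalBlock hA ht hv

/-- The ratio `‖per‖ / det` over principal blocks is monotone in the block and equals `1` on the
empty block. -/
theorem det_le_norm_permanent (hA : ∀ i j, 0 ≤ A i j) {t : ℝ} {z : ℂ} (ht : t ≤ ‖z‖)
    (hD : ∀ S, 0 < (principalBlock (scalar ι t - A) S).det) :
    (scalar ι t - A).det ≤ ‖(scalar ι z - A.map Complex.ofReal).permanent‖ := by
  have hmono : Monotone fun S =>
      ‖(principalBlock (scalar ι z - A.map Complex.ofReal) S).permanent‖ /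
        (principalBlock (scalar ι t - A) S).det :=
    Finset.monotone_of_erase_le fun S v hv hbelow =>
      norm_permanent_div_det_erase_le hA ht hD hv hbelow
  have hD_univ := hD univ
  rw [principalBlock_univ] at hD_univ
  rw [← one_le_div hD_univ]
  simpa using hmono (empty_subset univ)

end Comparison

section PosDef

variable {ι 𝕜 : Type*} [Fintype ι] [DecidableEq ι] [RCLike 𝕜]

theorem star_dotProduct_principalBlock_mulVec (M : Matrix ι ι 𝕜) (S : Finset ι) (x : ι → 𝕜) :
    star x ⬝ᵥ (principalBlock M S *ᵥ x) =
      star (fun i => if i ∈ S then x i else 0) ⬝ᵥ (M *ᵥ fun i => if i ∈ S then x i else 0) +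
        ∑ i ∈ Sᶜ, star (x i) * x i := by
  set y : ι → 𝕜 := fun i => if i ∈ S then x i else 0
  have hB : ∀ i ∈ S, (principalBlock M S *ᵥ x) i = (M *ᵥ y) i := fun i hi => by
    simp only [mulVec, dotProduct, principalBlock, of_apply, hi, true_and, y, mul_ite, mul_zero]
    refine sum_congr rfl fun j _ => ?_
    by_cases hj : j ∈ S
    · simp [hj]
    · simp [hj, one_apply_ne (ne_of_mem_of_not_mem hi hj)]
  have hBc : ∀ i ∉ S, (principalBlock M S *ᵥ x) i = x i := fun i hi => by
    simp [mulVec, dotProduct, principalBlock, hi, one_apply]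
  have hy : star y ⬝ᵥ (M *ᵥ y) = ∑ i ∈ S, star (x i) * (M *ᵥ y) i := by
    rw [dotProduct, ← sum_add_sum_compl S,
      sum_eq_zero (s := Sᶜ) fun i hi => by simp [y, mem_compl.mp hi], add_zero]
    exact sum_congr rfl fun i hi => by simp [y, hi]
  rw [hy, dotProduct, ← sum_add_sum_compl S]
  congr 1 <;> refine sum_congr rfl fun i hi => ?_
  · rw [hB i hi, Pi.star_apply]
  · rw [hBc i (mem_compl.mp hi), Pi.star_apply]

open scoped ComplexOrder

theorem PosDef.principalBlock {M : Matrix ι ι 𝕜} (hM : M.PosDef) (S : Finset ι) :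
    (principalBlock M S).PosDef := by
  refine .of_dotProduct_mulVec_pos ?_ fun x hx => ?_
  · ext i j
    by_cases hi : i ∈ S <;> by_cases hj : j ∈ S <;>
      simp [Matrix.principalBlock, hi, hj, hM.1.apply, one_apply, eq_comm]
  rw [star_dotProduct_principalBlock_mulVec]
  set y : ι → 𝕜 := fun i => if i ∈ S then x i else 0
  have hcompl : 0 ≤ ∑ i ∈ Sᶜ, star (x i) * x i := sum_nonneg fun i _ => star_mul_self_nonneg _
  by_cases hy : y = 0
  · obtain ⟨i, hi⟩ := Function.ne_iff.mp hx
    have hiS : i ∉ S := fun hiS => hi (by simpa [y, hiS] using congrFun hy i)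
    rw [hy, star_zero, zero_dotProduct, zero_add]
    exact sum_pos' (fun i _ => star_mul_self_nonneg _)
      ⟨i, mem_compl.mpr hiS, star_mul_self_pos (IsRegular.of_ne_zero hi)⟩
  · exact add_pos_of_pos_of_nonneg (hM.dotProduct_mulVec_pos hy) hcompl

theorem posDef_algebraMap_sub {A : Matrix ι ι 𝕜} (hA : A.IsHermitian) {t : ℝ}
    (ht : ∀ μ ∈ spectrum ℝ A, μ < t) : (algebraMap ℝ (Matrix ι ι 𝕜) t - A).PosDef := by
  have hB : (algebraMap ℝ (Matrix ι ι 𝕜) t - A).IsHermitian :=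
    (IsSelfAdjoint.algebraMap _ (.all t)).sub hA
  refine hB.posDef_iff_eigenvalues_pos.mpr fun i => ?_
  have hmem := hB.eigenvalues_mem_spectrum_real i
  rw [← spectrum.singleton_sub_eq] at hmem
  obtain ⟨_, rfl, μ, hμ, hi⟩ := hmem
  linarith [ht μ hμ]

end PosDef

end Matrix

open Matrix

theorem RingHom.map_permanent {ι R S : Type*} [Fintype ι] [DecidableEq ι] [CommRing R]
    [CommRing S] (f : R →+* S) (M : Matrix ι ι R) : f M.permanent = (M.map f).permanent := by
  simp [permanent, map_sum, map_prod]

section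

variable {n : ℕ}

theorem specRadius_nonneg (A : Matrix (Fin n) (Fin n) ℝ) : 0 ≤ specRadius A :=
  Real.sSup_nonneg <| by
    rintro _ ⟨μ, -, rfl⟩
    exact norm_nonneg μ

theorem le_specRadius_of_mem_spectrum {A : Matrix (Fin n) (Fin n) ℝ} {μ : ℝ}
    (hμ : μ ∈ spectrum ℝ A) : μ ≤ specRadius A := by
  have hbdd : BddAbove {r : ℝ | ∃ μ : ℂ, (A.map Complex.ofReal).charpoly.IsRoot μ ∧ ‖μ‖ = r} := by
    have hfin := finite_setOfPred_isRoot (charpoly_monic (A.map Complex.ofReal)).ne_zero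
    refine (hfin.image fun z : ℂ => ‖z‖).bddAbove.mono ?_
    rintro _ ⟨μ, hroot, rfl⟩
    exact ⟨μ, hroot, rfl⟩
  have hroot : (A.map Complex.ofReal).charpoly.IsRoot (μ : ℂ) := by
    rw [show A.map Complex.ofReal = A.map Complex.ofRealHom from rfl, charpoly_map]
    exact (mem_spectrum_iff_isRoot_charpoly.mp hμ).map
  calc μ ≤ ‖(μ : ℂ)‖ := by rw [Complex.norm_real]; exact Real.le_norm_self μ
    _ ≤ specRadius A := le_csSup hbdd ⟨μ, hroot, rfl⟩

theorem norm_le_specRadius_of_permanent_eq_zero {A : Matrix (Fin n) (Fin n) ℝ}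
    (hA : A.IsHermitian) (hA0 : ∀ i j, 0 ≤ A i j) {μ : ℂ}
    (hμ : (scalar (Fin n) μ - A.map Complex.ofReal).permanent = 0) : ‖μ‖ ≤ specRadius A := by
  by_contra! hlt
  have hD : ∀ S, 0 < (principalBlock (scalar (Fin n) ‖μ‖ - A) S).det := fun S =>
    ((posDef_algebraMap_sub hA fun ν hν =>
      (le_specRadius_of_mem_spectrum hν).trans_lt hlt).principalBlock S).det_pos
  have hcomp := det_le_norm_permanent hA0 le_rfl hD
  have hD_univ := hD Finset.univ
  rw [principalBlock_univ] at hD_univ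
  rw [hμ, norm_zero] at hcomp
  exact hcomp.not_gt hD_univ

theorem eval_permPoly {R : Type*} [CommRing R] (A : Matrix (Fin n) (Fin n) R) (μ : R) :
    (permPoly A).eval μ = (scalar (Fin n) μ - A).permanent := by
  rw [permPoly, ← coe_evalRingHom, RingHom.map_permanent]
  congr 1
  ext i j
  by_cases h : i = j <;> simp [h, one_apply]

theorem natDegree_permPoly_le_s8 {R : Type*} [CommRing R] (A : Matrix (Fin n) (Fin n) R) :
    (permPoly A).natDegree ≤ n := by
  refine natDegree_sum_le_of_forall_le _ _ fun σ _ => (natDegree_prod_le _ _).trans ?_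
  calc ∑ i, ((X • (1 : Matrix (Fin n) (Fin n) R[X]) - A.map C) (σ i) i).natDegree
      ≤ ∑ _i : Fin n, 1 := Finset.sum_le_sum fun i _ => by
        refine (natDegree_sub_le _ _).trans (max_le ?_ (by simp))
        by_cases h : σ i = i <;> simp [h, one_apply, natDegree_X_le]
    _ = n := by simp

theorem eval_graphPermPoly (G : SimpleGraph (Fin n)) [DecidableRel G.Adj] (μ : ℂ) :
    (graphPermPoly G).eval μ =
      (scalar (Fin n) μ - (G.adjMatrix ℝ).map Complex.ofReal).permanent := by
  rw [graphPermPoly, eval_permPoly]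
  congr 2
  ext i j
  by_cases h : G.Adj i j <;> simp [h, SimpleGraph.adjMatrix_apply]

end

/-- **Upper bound via the spectral radius.** For every simple graph `G` on `n` vertices,
`E_per(G) ≤ n·ρ(G)`. -/
theorem perEnergy_le_card_mul_spectralRadius {n : ℕ} (G : SimpleGraph (Fin n))
    [DecidableRel G.Adj] :
    perEnergy G ≤ (n : ℝ) * specRadius (G.adjMatrix ℝ) := by
  have hroots : ∀ μ ∈ (graphPermPoly G).roots, ‖μ‖ ≤ specRadius (G.adjMatrix ℝ) := by
    intro μ hμ
    refine norm_le_specRadius_of_permanent_eq_zero (G.isHermitian_adjMatrix ℝ)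
      (fun i j => by by_cases h : G.Adj i j <;> simp [h]) ?_
    rw [← eval_graphPermPoly]
    exact (mem_roots'.mp hμ).2
  have hcard : ((graphPermPoly G).roots.card : ℝ) ≤ n := by
    exact_mod_cast (card_roots' _).trans (natDegree_permPoly_le_s8 _)
  calc perEnergy G ≤ (graphPermPoly G).roots.card • specRadius (G.adjMatrix ℝ) := by
        simpa [perEnergy] using
          Multiset.sum_le_card_nsmul _ _ (Multiset.forall_mem_map_iff.mpr hroots)
    _ ≤ n * specRadius (G.adjMatrix ℝ) := by
        rw [nsmul_eq_mul]
        exact mul_le_mul_of_nonneg_right hcard (specRadius_nonneg _)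
end

section
/- Let G be a finite simple bipartite graph on n vertices that contains no cycle of length 4k for any integer k ≥ 1. Then π(G,x) = i^{−n} · χ(G, i·x) as polynomials over ℂ, where i is the imaginary unit; equivalently, the multiset of roots of π(G,x) equals {−i·λ_1, …, −i·λ_n}, where λ_1, …, λ_n are the adjacency eigenvalues of G (with multiplicity). -/
/-!
Expand `per (x I - A)` and `det (x I - A)` over permutations. Only permutations `σ` moving every
moved vertex to a neighbour contribute, and the cycles of such a `σ` are edges or cycles of `G`;
bipartiteness and the absence of `4k`-cycles force each cycle length to be `2 mod 4`, so
`sign σ = i ^ #supp σ`. Since `A` has zero diagonal, substituting `i x` for `x` multiplies the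
`σ`-term by `i ^ #fix σ`. Hence every term of `χ(G, i x)` is `i ^ n` times the corresponding term
of `π(G, x)`.
-/

open Polynomial Matrix

open Finset Equiv

namespace Equiv.Perm

variable {α : Type*} [Fintype α] [DecidableEq α]

theorem sign_eq_I_pow_card_support {σ : Perm α} (hσ : ∀ k ∈ σ.cycleType, k % 4 = 2) :
    ((sign σ : ℤ) : ℂ) = Complex.I ^ #σ.support := by
  rw [sign_of_cycleType', ← sum_cycleType]
  generalize σ.cycleType = s at hσ
  induction s using Multiset.induction_on with
  | empty => simp
  | cons k s ih =>
    obtain ⟨q, rfl⟩ : ∃ q, k = 4 * q + 2 := ⟨k / 4, by have := hσ k (by simp); omega⟩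
    rw [Multiset.map_cons, Multiset.prod_cons, Multiset.sum_cons, pow_add, Units.val_mul,
      Int.cast_mul, ih fun k hk => hσ k (Multiset.mem_cons_of_mem hk)]
    simp [pow_add, pow_mul]

end Equiv.Perm

namespace SimpleGraph

variable {V : Type*} [Fintype V] [DecidableEq V] {G : SimpleGraph V}

theorem cycleGraph_isContained_of_isCycle {c : Perm V} (hc : c.IsCycle)
    (hG : ∀ v, c v ≠ v → G.Adj (c v) v) : cycleGraph #c.support ⊑ G := by
  have hcycOn : c.IsCycleOn (c.support : Set V) := by
    simpa [Perm.coe_support_eq_set_support] using hc.isCycleOn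
  have hm : 2 ≤ #c.support := hc.two_le_card_support
  obtain ⟨a, ha, -⟩ := hc
  set m := #c.support
  have hpow : ∀ i j : ℕ, (c ^ i) a = (c ^ j) a ↔ i ≡ j [MOD m] :=
    fun i j => hcycOn.pow_apply_eq_pow_apply (Perm.mem_support.mpr ha)
  have hadj : ∀ u v : Fin m, (v - u).val = 1 →
      G.Adj ((c ^ (v : ℕ)) a) ((c ^ (u : ℕ)) a) := by
    intro u v huv
    have hv : (c ^ (v : ℕ)) a = c ((c ^ (u : ℕ)) a) := by
      rw [← Perm.mul_apply, ← pow_succ', hpow]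
      rw [Fin.val_sub] at huv
      calc (v : ℕ) ≡ m - u + v + u [MOD m] := by
            rw [show m - u + v + u = v + m by omega]; exact Nat.add_modEq_right.symm
        _ ≡ 1 + u [MOD m] := Nat.ModEq.add_right _ (huv.trans (Nat.mod_eq_of_lt hm).symm)
        _ = u + 1 := add_comm _ _
    rw [hv]
    exact hG _ (Perm.mem_support.mp (Perm.pow_apply_mem_support.mpr (Perm.mem_support.mpr ha)))
  refine ⟨⟨⟨fun i => (c ^ (i : ℕ)) a, fun {u v} huv => ?_⟩, fun u v huv => ?_⟩⟩
  · rcases cycleGraph_adj'.mp huv with h | h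
    · exact hadj v u h
    · exact (hadj u v h).symm
  · exact Fin.ext (Nat.ModEq.eq_of_lt_of_lt ((hpow _ _).mp huv) u.isLt v.isLt)

theorem card_support_mod_four_eq_two_of_isCycle (hbip : G.Colorable 2)
    (hcyc : ∀ (v : V) (w : G.Walk v v), w.IsCycle → ¬ 4 ∣ w.length) {c : Perm V}
    (hc : c.IsCycle) (hG : ∀ v, c v ≠ v → G.Adj (c v) v) : #c.support % 4 = 2 := by
  rcases hc.two_le_card_support.eq_or_lt with h2 | h3
  · rw [← h2]
  obtain ⟨v, p, hp, hlen⟩ := (cycleGraph_isContained_iff h3).mp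
    (cycleGraph_isContained_of_isCycle hc hG)
  obtain ⟨r, hr⟩ := two_colorable_iff_forall_loop_even.mp hbip v p
  have := hcyc v p hp
  omega

theorem forall_mem_cycleType_mod_four_eq_two (hbip : G.Colorable 2)
    (hcyc : ∀ (v : V) (w : G.Walk v v), w.IsCycle → ¬ 4 ∣ w.length) {σ : Perm V}
    (hG : ∀ v, σ v ≠ v → G.Adj (σ v) v) : ∀ k ∈ σ.cycleType, k % 4 = 2 := by
  simp only [Perm.cycleType_def, Multiset.mem_map, Function.comp_apply]
  rintro k ⟨c, hc, rfl⟩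
  obtain ⟨hc, hcσ⟩ := Perm.mem_cycleFactorsFinset_iff.mp hc
  refine card_support_mod_four_eq_two_of_isCycle hbip hcyc hc fun v hv => ?_
  have hcv := hcσ v (Perm.mem_support.mpr hv)
  rw [hcv] at hv ⊢
  exact hG v hv

theorem adj_of_prod_charmatrix_adjMatrix_ne_zero {R : Type*} [CommRing R] [DecidableRel G.Adj]
    {σ : Perm V} (h : ∏ v, charmatrix (G.adjMatrix R) (σ v) v ≠ 0) (v : V) (hv : σ v ≠ v) :
    G.Adj (σ v) v := by
  by_contra hadj
  exact h (prod_eq_zero (mem_univ v) (by simp [charmatrix_apply_ne _ _ _ hv, hadj]))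

end SimpleGraph

theorem Matrix.prod_charmatrix_comp_C_mul_X {ι R : Type*} [Fintype ι] [DecidableEq ι]
    [CommRing R] {A : Matrix ι ι R} (hA : ∀ i, A i i = 0) (σ : Perm ι) (c : R) :
    (∏ i, charmatrix A (σ i) i).comp (C c * X) =
      C c ^ #σ.supportᶜ * ∏ i, charmatrix A (σ i) i := by
  have hentry : ∀ i, (charmatrix A (σ i) i).comp (C c * X)
      = (if i ∈ σ.supportᶜ then C c else 1) * charmatrix A (σ i) i := by
    intro i
    by_cases hi : σ i = i
    · simp [hi, charmatrix_apply_eq, hA]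
    · simp [hi]
  rw [Polynomial.prod_comp, prod_congr rfl fun i _ => hentry i, prod_mul_distrib, prod_ite_mem,
    univ_inter, prod_const]

theorem permPoly_eq_permanent_charmatrix {n : ℕ} {R : Type*} [CommRing R]
    (A : Matrix (Fin n) (Fin n) R) : permPoly A = (charmatrix A).permanent := by
  rw [permPoly, charmatrix, smul_one_eq_diagonal]
  rfl

/-- **Borowiecki.** If `G` is bipartite and contains no cycle of length `4k` for any
`k ≥ 1`, then `π(G,x) = i^{−n}·χ(G, i·x)` as polynomials over `ℂ`. -/
theorem permPoly_eq_I_zpow_smul_charpoly_comp {n : ℕ} (G : SimpleGraph (Fin n))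
    [DecidableRel G.Adj] (hbip : G.Colorable 2)
    (hcyc : ∀ (v : Fin n) (w : G.Walk v v), w.IsCycle → ¬ (4 ∣ w.length)) :
    permPoly (G.adjMatrix ℂ) =
      Complex.I ^ (-(n : ℤ)) •
        ((G.adjMatrix ℂ).charpoly.comp (Polynomial.C Complex.I * Polynomial.X)) := by
  set A := G.adjMatrix ℂ
  have hterm : ∀ σ : Perm (Fin n),
      ((Perm.sign σ : ℤ) : ℂ[X]) * (∏ i, charmatrix A (σ i) i).comp (C Complex.I * X) =
        C (Complex.I ^ n) * ∏ i, charmatrix A (σ i) i := by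
    intro σ
    by_cases h : ∏ i, charmatrix A (σ i) i = 0
    · simp [h]
    have hG := G.adj_of_prod_charmatrix_adjMatrix_ne_zero h
    rw [prod_charmatrix_comp_C_mul_X (fun i => by simp [A]), ← mul_assoc,
      ← map_intCast (C : ℂ →+* ℂ[X]),
      Perm.sign_eq_I_pow_card_support (G.forall_mem_cycleType_mod_four_eq_two hbip hcyc hG),
      ← map_pow, ← map_mul, ← pow_add, card_add_card_compl, Fintype.card_fin]
  have hcomp : A.charpoly.comp (C Complex.I * X) = Complex.I ^ n • permPoly A := by
    rw [permPoly_eq_permanent_charmatrix, permanent, smul_eq_C_mul, mul_sum, charpoly, det_apply',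
      ← coe_compRingHom_apply, map_sum]
    refine sum_congr rfl fun σ _ => ?_
    rw [map_mul, map_intCast, coe_compRingHom_apply, hterm]
  rw [hcomp, smul_smul, _root_.zpow_neg, zpow_natCast,
    inv_mul_cancel₀ (pow_ne_zero _ Complex.I_ne_zero), one_smul]
end

section
/- Let G be a finite simple graph on n vertices with m edges and adjacency matrix A(G). Suppose there exists a real n×n skew-symmetric matrix S (i.e., Sᵀ = −S) such that |S_{uv}| = A(G)_{uv} for all vertices u, v, and such that per(x·I − A(G)) = det(x·I − S) as polynomials. Then E_per(G) ≤ √(2mn). -/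
open Polynomial Matrix

/-!
Since `S` is real skew-symmetric, `H = i • S` is Hermitian, with real eigenvalues `λ₁, …, λₙ`,
and `det(x·I − S)` has the roots `-i λⱼ`; hence `E_per(G) = ∑ |λⱼ|`. On the other hand
`∑ λⱼ² = tr(H Hᴴ) = ∑ |S_{uv}|² = ∑ A(G)_{uv} = 2m`, and Cauchy–Schwarz gives
`(∑ |λⱼ|)² ≤ n · 2m`.
-/

namespace Matrix

variable {n : Type*}

theorem isHermitian_I_smul_map_ofReal {S : Matrix n n ℝ} (hS : Sᵀ = -S) :
    (Complex.I • S.map Complex.ofReal).IsHermitian := by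
  have hskew : (S.map Complex.ofReal)ᴴ = -S.map Complex.ofReal := by
    ext i j
    have hji : S j i = -S i j := by simpa using congrFun₂ hS i j
    simp [hji]
  rw [IsHermitian, conjTranspose_smul, hskew, Complex.star_def, Complex.conj_I, neg_smul_neg]

variable [Fintype n] [DecidableEq n]

section Unitary

variable {R : Type*} [CommRing R] [StarRing R] (U : unitary (Matrix n n R)) (A : Matrix n n R)

theorem charpoly_conjStarAlgAut : (Unitary.conjStarAlgAut R _ U A).charpoly = A.charpoly := by
  rw [Unitary.conjStarAlgAut_apply, charpoly_mul_comm, ← mul_assoc, Unitary.coe_star_mul_self,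
    one_mul]

theorem trace_conjStarAlgAut : (Unitary.conjStarAlgAut R _ U A).trace = A.trace := by
  rw [Unitary.conjStarAlgAut_apply, trace_mul_cycle, Unitary.coe_star_mul_self, one_mul]

end Unitary

namespace IsHermitian

variable {𝕜 : Type*} [RCLike 𝕜] {A : Matrix n n 𝕜} (hA : A.IsHermitian)
include hA

theorem roots_charpoly_smul (c : 𝕜) :
    (c • A).charpoly.roots = Multiset.map (fun i ↦ c * hA.eigenvalues i) Finset.univ.val := by
  conv_lhs => rw [hA.spectral_theorem, ← map_smul, charpoly_conjStarAlgAut, ← diagonal_smul,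
    charpoly_diagonal]
  simp only [Pi.smul_apply, Function.comp_apply, smul_eq_mul]
  rw [Polynomial.roots_prod _ _ (Finset.prod_ne_zero_iff.2 fun i _ ↦ X_sub_C_ne_zero _)]
  simp_rw [roots_X_sub_C, Multiset.bind_singleton]

theorem sum_sq_eigenvalues : ∑ i, hA.eigenvalues i ^ 2 = ∑ i, ∑ j, ‖A i j‖ ^ 2 := by
  have hspec : (A * A).trace = ∑ i, (hA.eigenvalues i : 𝕜) ^ 2 := by
    conv_lhs => rw [hA.spectral_theorem, ← map_mul, trace_conjStarAlgAut, diagonal_mul_diagonal,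
      trace_diagonal]
    simp [sq]
  have hentries : (A * Aᴴ).trace = ∑ i, ∑ j, (‖A i j‖ ^ 2 : 𝕜) := by
    simp [trace, mul_apply, RCLike.mul_conj]
  rw [hA.eq] at hentries
  exact_mod_cast hspec.symm.trans hentries

end IsHermitian

end Matrix

theorem SimpleGraph.sum_sum_adjMatrix_sq {V α : Type*} [Fintype V] (G : SimpleGraph V)
    [DecidableRel G.Adj] [Semiring α] :
    ∑ u, ∑ v, G.adjMatrix α u v ^ 2 = 2 * (G.edgeFinset.card : α) := by
  have hsq (u v : V) : G.adjMatrix α u v ^ 2 = G.adjMatrix α u v := by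
    by_cases h : G.Adj u v <;> simp [h]
  have hrow (u : V) : ∑ v, G.adjMatrix α u v = G.degree u := by
    simp [adjMatrix_apply, Finset.sum_boole, ← G.card_neighborFinset_eq_degree,
      G.neighborFinset_eq_filter]
  simp only [hsq, hrow]
  rw [← Nat.cast_sum, G.sum_degrees_eq_twice_card_edges, Nat.cast_mul, Nat.cast_ofNat]

/-- **McClelland-type bound.** If there is a real skew-symmetric matrix `S` with
`|S_{uv}| = A(G)_{uv}` for all `u, v` and `per(x·I − A(G)) = det(x·I − S)`,
then `E_per(G) ≤ √(2mn)`. -/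
theorem perEnergy_le_sqrt_of_skew_model {n : ℕ} (G : SimpleGraph (Fin n))
    [DecidableRel G.Adj] (S : Matrix (Fin n) (Fin n) ℝ)
    (hskew : Sᵀ = -S)
    (habs : ∀ u v, |S u v| = G.adjMatrix ℝ u v)
    (hper : permPoly (G.adjMatrix ℂ) = (S.map Complex.ofReal).charpoly) :
    perEnergy G ≤ Real.sqrt (2 * (G.edgeFinset.card : ℝ) * (n : ℝ)) := by
  have hH := Matrix.isHermitian_I_smul_map_ofReal hskew
  set μ := hH.eigenvalues
  have hroots : (graphPermPoly G).roots =
      Multiset.map (fun i ↦ -Complex.I * μ i) Finset.univ.val := by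
    have hM : S.map Complex.ofReal = -Complex.I • Complex.I • S.map Complex.ofReal := by
      simp [smul_smul]
    rw [graphPermPoly, Subsingleton.elim (Classical.decRel G.Adj) ‹_›, hper]
    conv_lhs => rw [hM]
    exact hH.roots_charpoly_smul _
  have henergy : perEnergy G = ∑ i, |μ i| := by
    rw [perEnergy, hroots, Multiset.map_map, Finset.sum_eq_multiset_sum]
    congr 1
    exact Multiset.map_congr rfl fun i _ ↦ by simp
  have hsum_sq : ∑ i, μ i ^ 2 = 2 * G.edgeFinset.card := by
    rw [hH.sum_sq_eigenvalues, ← G.sum_sum_adjMatrix_sq]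
    refine Finset.sum_congr rfl fun u _ ↦ Finset.sum_congr rfl fun v _ ↦ ?_
    rw [Matrix.smul_apply, map_apply, smul_eq_mul, norm_mul, Complex.norm_I, one_mul,
      Complex.norm_real, Real.norm_eq_abs, habs]
  rw [henergy]
  refine Real.le_sqrt_of_sq_le ?_
  calc (∑ i, |μ i|) ^ 2 ≤ n * ∑ i, |μ i| ^ 2 := by
        simpa using sq_sum_le_card_mul_sum_sq (s := Finset.univ) (f := fun i ↦ |μ i|)
    _ = 2 * G.edgeFinset.card * n := by rw [← hsum_sq]; simp [sq_abs, mul_comm]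
end
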